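/- arXiv:2307.13257 — 7 statements merged into one kernel-verified Lean document; each statement's English description precedes it below -/
import Mathlib

section
/- Any multiset of affine hyperplanes in ℝ^d that covers every point of the triangular grid T_d(n) = {x ∈ ℤ_{≥0}^d : x_1 + ⋯ + x_d ≤ n−1} at least once has cardinality at least n. -/
open scoped Classical

/-- The triangular grid `T_d(n)`. -/
def TriGrid (d n : ℕ) : Set (Fin d → ℤ) :=
  {x | (∀ i, 0 ≤ x i) ∧ (∑ i, x i) ≤ (n : ℤ) - 1}

/-- Cast an integer point to a real point. -/
def toReal {d : ℕ} (x : Fin d → ℤ) : Fin d → ℝ := fun i => (x i : ℝ)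

/-- Number of hyperplanes (with multiplicity) of the multiset `C` passing through `p`.
A hyperplane is encoded as a pair `(a, b)` with `a ≠ 0`, representing `{p | ∑ i, a i * p i = b}`. -/
noncomputable def hypCount (d : ℕ) (C : Multiset ((Fin d → ℝ) × ℝ)) (p : Fin d → ℝ) : ℕ :=
  Multiset.countP (fun H => ∑ i, H.1 i * p i = H.2) C

/-!
Induction on `d`, and for fixed `d` on `n`. If the hyperplane `x₀ = 0` occurs in the cover,
the remaining hyperplanes cover the translate `e₀ + T_d(n-1)` of the grid. Otherwise each
hyperplane meets the facet `x₀ = 0 ≅ ℝ^{d-1}` in a hyperplane or in the empty set, and these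
traces cover `T_{d-1}(n)`. Both reductions stay inside the class of equations `(a, b) ≠ (0, 0)`,
i.e. of proper affine subsets, which is what the induction runs over.
-/

open Finset

def Covers (d n : ℕ) (C : Multiset ((Fin d → ℝ) × ℝ)) : Prop :=
  ∀ x ∈ TriGrid d n, 1 ≤ hypCount d C (toReal x)

def translateHyp {d : ℕ} (v : Fin d → ℝ) (H : (Fin d → ℝ) × ℝ) : (Fin d → ℝ) × ℝ :=
  (H.1, H.2 - ∑ i, H.1 i * v i)

def restrictHyp {d : ℕ} (H : (Fin (d + 1) → ℝ) × ℝ) : (Fin d → ℝ) × ℝ :=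
  (fun i => H.1 i.succ, H.2)

section Grid

variable {d n : ℕ}

lemma zero_mem_triGrid : (0 : Fin d → ℤ) ∈ TriGrid d (n + 1) :=
  ⟨fun _ => le_rfl, by simp⟩

lemma add_single_mem_triGrid {y : Fin d → ℤ} (hy : y ∈ TriGrid d n) (i : Fin d) :
    y + Pi.single i 1 ∈ TriGrid d (n + 1) := by
  refine ⟨fun j => add_nonneg (hy.1 j) ?_, ?_⟩
  · rw [Pi.single_apply]; split_ifs <;> norm_num
  · simp only [Pi.add_apply, sum_add_distrib, sum_pi_single', mem_univ, if_true]
    push_cast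
    linarith [hy.2]

lemma cons_zero_mem_triGrid {y : Fin d → ℤ} (hy : y ∈ TriGrid d n) :
    (Fin.cons 0 y : Fin (d + 1) → ℤ) ∈ TriGrid (d + 1) n := by
  refine ⟨fun j => Fin.cases le_rfl hy.1 j, ?_⟩
  simpa [Fin.sum_univ_succ] using hy.2

lemma toReal_add_single (y : Fin d → ℤ) (i : Fin d) :
    toReal (y + Pi.single i 1) = toReal y + Pi.single i 1 := by
  ext j
  simp only [toReal, Pi.add_apply, Pi.single_apply]
  split_ifs <;> simp

lemma toReal_cons_zero (y : Fin d → ℤ) :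
    toReal (Fin.cons 0 y : Fin (d + 1) → ℤ) = Fin.cons 0 (toReal y) := by
  ext j
  cases j using Fin.cases <;> simp [toReal]

end Grid

section HypCount

variable {d : ℕ}

lemma one_le_hypCount_iff {C : Multiset ((Fin d → ℝ) × ℝ)} {p : Fin d → ℝ} :
    1 ≤ hypCount d C p ↔ ∃ H ∈ C, ∑ i, H.1 i * p i = H.2 :=
  Multiset.countP_pos

lemma hypCount_erase_of_not_mem {C : Multiset ((Fin d → ℝ) × ℝ)} {H : (Fin d → ℝ) × ℝ}
    (hH : H ∈ C) {p : Fin d → ℝ} (hp : ∑ i, H.1 i * p i ≠ H.2) :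
    hypCount d (C.erase H) p = hypCount d C p := by
  conv_rhs => rw [← Multiset.cons_erase hH]
  exact (Multiset.countP_cons_of_neg
    (p := fun G : (Fin d → ℝ) × ℝ => ∑ i, G.1 i * p i = G.2) _ hp).symm

lemma hypCount_map_translateHyp (C : Multiset ((Fin d → ℝ) × ℝ)) (v p : Fin d → ℝ) :
    hypCount d (C.map (translateHyp v)) p = hypCount d C (p + v) := by
  rw [hypCount, Multiset.countP_map, ← Multiset.countP_eq_card_filter]
  refine Multiset.countP_congr rfl fun H _ => propext ?_
  simp only [translateHyp, Pi.add_apply, mul_add, sum_add_distrib, eq_sub_iff_add_eq]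

lemma hypCount_map_restrictHyp (C : Multiset ((Fin (d + 1) → ℝ) × ℝ)) (q : Fin d → ℝ) :
    hypCount d (C.map restrictHyp) q = hypCount (d + 1) C (Fin.cons 0 q) := by
  rw [hypCount, Multiset.countP_map, ← Multiset.countP_eq_card_filter]
  refine Multiset.countP_congr rfl fun H _ => ?_
  simp [restrictHyp, Fin.sum_univ_succ]

end HypCount

lemma translateHyp_eq_zero_iff {d : ℕ} {v : Fin d → ℝ} {H : (Fin d → ℝ) × ℝ} :
    translateHyp v H = 0 ↔ H = 0 := by
  refine ⟨fun h => ?_, fun h => by simp [h, translateHyp]⟩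
  have ha : H.1 = 0 := congrArg Prod.fst h
  have hb : H.2 - ∑ i, H.1 i * v i = 0 := congrArg Prod.snd h
  simp_all [Prod.ext_iff]

lemma sum_mul_eq_iff_of_restrictHyp_eq_zero {d : ℕ} {H : (Fin (d + 1) → ℝ) × ℝ} (hH : H ≠ 0)
    (hr : restrictHyp H = 0) (p : Fin (d + 1) → ℝ) : ∑ i, H.1 i * p i = H.2 ↔ p 0 = 0 := by
  have hsucc : ∀ i : Fin d, H.1 i.succ = 0 := fun i => congrFun (congrArg Prod.fst hr) i
  have hb : H.2 = 0 := congrArg Prod.snd hr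
  have h0 : H.1 0 ≠ 0 := fun h0 =>
    hH (Prod.ext (funext fun i => Fin.cases h0 hsucc i) hb)
  simp [Fin.sum_univ_succ, hsucc, hb, h0]

namespace Covers

variable {d n : ℕ}

lemma erase_map_translateHyp {C : Multiset ((Fin (d + 1) → ℝ) × ℝ)}
    (hC : Covers (d + 1) (n + 1) C) {H : (Fin (d + 1) → ℝ) × ℝ} (hH : H ∈ C) (hH0 : H ≠ 0)
    (hr : restrictHyp H = 0) :
    Covers (d + 1) n ((C.erase H).map (translateHyp (Pi.single 0 1))) := by
  intro y hy
  rw [hypCount_map_translateHyp, ← toReal_add_single, hypCount_erase_of_not_mem hH]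
  · exact hC _ (add_single_mem_triGrid hy 0)
  · rw [Ne, sum_mul_eq_iff_of_restrictHyp_eq_zero hH0 hr]
    have : (0 : ℝ) ≤ y 0 := mod_cast hy.1 0
    simp only [toReal, Pi.add_apply, Pi.single_eq_same, Int.cast_add, Int.cast_one]
    positivity

lemma map_restrictHyp {C : Multiset ((Fin (d + 1) → ℝ) × ℝ)} (hC : Covers (d + 1) n C) :
    Covers d n (C.map restrictHyp) := fun y hy => by
  rw [hypCount_map_restrictHyp, ← toReal_cons_zero]
  exact hC _ (cons_zero_mem_triGrid hy)

theorem le_card {C : Multiset ((Fin d → ℝ) × ℝ)} (h0 : 0 ∉ C) (hC : Covers d n C) :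
    n ≤ Multiset.card C := by
  induction d generalizing n with
  | zero =>
    cases n with
    | zero => exact Nat.zero_le _
    | succ n =>
      obtain ⟨H, hH, hH2⟩ := one_le_hypCount_iff.mp (hC 0 zero_mem_triGrid)
      have hH0 : H = 0 := Prod.ext (Subsingleton.elim _ _) (by simpa using hH2.symm)
      exact absurd (hH0 ▸ hH) h0
  | succ d ihd =>
    induction n generalizing C with
    | zero => exact Nat.zero_le _
    | succ n ihn =>
      by_cases hA : 0 ∈ C.map restrictHyp
      · obtain ⟨H, hH, hr⟩ := Multiset.mem_map.mp hA
        have h0' : 0 ∉ (C.erase H).map (translateHyp (Pi.single 0 1)) := fun h => by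
          obtain ⟨G, hG, hG0⟩ := Multiset.mem_map.mp h
          exact h0 (translateHyp_eq_zero_iff.mp hG0 ▸ Multiset.mem_of_mem_erase hG)
        have := ihn h0' (hC.erase_map_translateHyp hH (ne_of_mem_of_not_mem hH h0) hr)
        rw [Multiset.card_map] at this
        rw [← Multiset.card_erase_add_one hH]
        omega
      · simpa using ihd hA hC.map_restrictHyp

end Covers

theorem stmt0_general (d n : ℕ)
    (C : Multiset ((Fin d → ℝ) × ℝ))
    (hC : ∀ H ∈ C, H.1 ≠ 0)
    (hcov : ∀ x ∈ TriGrid d n, 1 ≤ hypCount d C (toReal x)) :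
    n ≤ Multiset.card C :=
  Covers.le_card (fun h0 => hC 0 h0 rfl) hcov

theorem stmt0 (d n : ℕ) (hd : 1 ≤ d) (hn : 1 ≤ n)
    (C : Multiset ((Fin d → ℝ) × ℝ))
    (hC : ∀ H ∈ C, H.1 ≠ 0)
    (hcov : ∀ x ∈ TriGrid d n, 1 ≤ hypCount d C (toReal x)) :
    n ≤ Multiset.card C :=
  stmt0_general d n C hC hcov
end

section
/- Any multiset of lines in ℝ² covering every point of T_2(n) at least twice has cardinality at least ⌈3n/2⌉, for all n ≥ 2. -/
/-!
Every line meets `T_2(n)` in at most `n` points. A line through three lattice points of the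
boundary of the triangle passes through one of them strictly between the other two; since the
triangle lies on one side of each side line, the line must then be a side line. So a line that
is not a side line meets the `3n - 3` boundary points in at most two points.

If at most three lines of a 2-cover `C` are side lines, counting incidences with the boundary
points gives `2(3n - 3) ≤ 2|C| + 3(n - 2)`, i.e. `3n ≤ 2|C|`. Otherwise some side line occurs
twice; removing all lines along that side leaves a 2-cover of a translate of `T_2(n - 1)`, and
induction gives `|C| ≥ 2 + ⌈3(n - 1)/2⌉ ≥ ⌈3n/2⌉`.
-/

open scoped Classical

open Finset

lemma exists_eq_smul_of_dotProduct_eq_zero {a x : Fin 2 → ℝ} (ha : a ≠ 0) (hx : a ⬝ᵥ x = 0) :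
    ∃ r : ℝ, x = r • ![-a 1, a 0] := by
  have hpos : a 0 ^ 2 + a 1 ^ 2 ≠ 0 := by
    intro h
    apply ha
    ext i
    fin_cases i <;> simp <;> nlinarith [sq_nonneg (a 0), sq_nonneg (a 1)]
  simp only [dotProduct, Fin.sum_univ_two] at hx
  refine ⟨(a 0 * x 1 - a 1 * x 0) / (a 0 ^ 2 + a 1 ^ 2), ?_⟩
  ext i
  fin_cases i
  · simp only [Fin.zero_eta, Pi.smul_apply, Matrix.cons_val_zero, smul_eq_mul]
    field_simp
    linear_combination a 0 * hx
  · simp only [Fin.mk_one, Pi.smul_apply, Matrix.cons_val_one, Matrix.cons_val_fin_one,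
      smul_eq_mul]
    field_simp
    linear_combination a 1 * hx

lemma collinear_of_dotProduct_eq {a : Fin 2 → ℝ} (ha : a ≠ 0) {c : ℝ} {s : Set (Fin 2 → ℝ)}
    (hs : ∀ p ∈ s, a ⬝ᵥ p = c) : Collinear ℝ s := by
  rcases s.eq_empty_or_nonempty with rfl | ⟨p₀, hp₀⟩
  · exact collinear_empty ℝ _
  refine (collinear_iff_exists_forall_eq_smul_vadd s).2 ⟨p₀, ![-a 1, a 0], fun p hp => ?_⟩
  obtain ⟨r, hr⟩ := exists_eq_smul_of_dotProduct_eq_zero ha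
    (show a ⬝ᵥ (p - p₀) = 0 by rw [dotProduct_sub, hs p hp, hs p₀ hp₀, sub_self])
  exact ⟨r, by rw [← hr, vadd_eq_add, sub_add_cancel]⟩

lemma dotProduct_eq_of_two_points {a b u w p : Fin 2 → ℝ} {c d : ℝ} (ha : a ≠ 0) (huw : u ≠ w)
    (hau : a ⬝ᵥ u = c) (haw : a ⬝ᵥ w = c) (hbu : b ⬝ᵥ u = d) (hbw : b ⬝ᵥ w = d)
    (hap : a ⬝ᵥ p = c) : b ⬝ᵥ p = d := by
  obtain ⟨r, hr⟩ := exists_eq_smul_of_dotProduct_eq_zero ha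
    (show a ⬝ᵥ (w - u) = 0 by rw [dotProduct_sub, haw, hau, sub_self])
  obtain ⟨s, hs⟩ := exists_eq_smul_of_dotProduct_eq_zero ha
    (show a ⬝ᵥ (p - u) = 0 by rw [dotProduct_sub, hap, hau, sub_self])
  have hr0 : r ≠ 0 := by
    rintro rfl
    exact huw (sub_eq_zero.1 (by simpa using hr)).symm
  have hbv : b ⬝ᵥ ![-a 1, a 0] = 0 := by
    have h := congrArg (b ⬝ᵥ ·) hr
    simp only [dotProduct_sub, dotProduct_smul, hbw, hbu, sub_self, smul_eq_mul] at h
    exact (mul_eq_zero.1 h.symm).resolve_left hr0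
  have h := congrArg (b ⬝ᵥ ·) hs
  simp only [dotProduct_sub, dotProduct_smul, hbv, hbu, smul_zero] at h
  exact sub_eq_zero.1 h

lemma dotProduct_eq_of_sbtw {a b x y z p : Fin 2 → ℝ} {c d : ℝ} (ha : a ≠ 0)
    (hxyz : Sbtw ℝ x y z) (hax : a ⬝ᵥ x = c) (haz : a ⬝ᵥ z = c)
    (hbx : d ≤ b ⬝ᵥ x) (hbz : d ≤ b ⬝ᵥ z) (hby : b ⬝ᵥ y = d) (hap : a ⬝ᵥ p = c) :
    b ⬝ᵥ p = d := by
  obtain ⟨t, ⟨ht0, ht1⟩, rfl⟩ := hxyz.mem_image_Ioo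
  rw [AffineMap.lineMap_apply_module, dotProduct_add, dotProduct_smul, dotProduct_smul,
    smul_eq_mul, smul_eq_mul] at hby
  have hbx' : b ⬝ᵥ x = d := by nlinarith
  have hbz' : b ⬝ᵥ z = d := by nlinarith
  exact dotProduct_eq_of_two_points ha hxyz.left_ne_right hax haz hbx' hbz' hap

lemma toReal_injective {d : ℕ} : Function.Injective (toReal (d := d)) := fun _ _ h =>
  funext fun i => Int.cast_injective (congrFun h i)

lemma toReal_add {d : ℕ} (x y : Fin d → ℤ) : toReal (x + y) = toReal x + toReal y := by
  ext i
  simp [toReal]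

lemma mem_TriGrid_two {n : ℕ} {x : Fin 2 → ℤ} :
    x ∈ TriGrid 2 n ↔ 0 ≤ x 0 ∧ 0 ≤ x 1 ∧ x 0 + x 1 ≤ n - 1 := by
  simp [TriGrid, Fin.forall_fin_two, and_assoc]

lemma dotProduct_toReal_two (a : Fin 2 → ℝ) (x : Fin 2 → ℤ) :
    a ⬝ᵥ toReal x = a 0 * x 0 + a 1 * x 1 := by
  simp [dotProduct, Fin.sum_univ_two, toReal]

lemma apply_le_of_mem_TriGrid {d n : ℕ} {x : Fin d → ℤ} (hx : x ∈ TriGrid d n) (k : Fin d) :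
    x k ≤ n - 1 :=
  (single_le_sum (fun i _ => hx.1 i) (mem_univ k)).trans hx.2

lemma eq_of_dotProduct_toReal_eq {d : ℕ} {a : Fin d → ℝ} {x y : Fin d → ℤ}
    (h : a ⬝ᵥ toReal x = a ⬝ᵥ toReal y) {j : Fin d} (hj : a j ≠ 0) (hxy : ∀ k ≠ j, x k = y k) :
    x = y := by
  have hsub : toReal x - toReal y = Pi.single j ((x j - y j : ℤ) : ℝ) := by
    ext k
    by_cases hk : k = j
    · subst hk; simp [toReal]
    · simp [toReal, hk, hxy k hk]
  rw [← sub_eq_zero, ← dotProduct_sub, hsub, dotProduct_single, mul_eq_zero] at h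
  have hj' : x j = y j := by
    rcases h with h | h
    · exact absurd h hj
    · exact sub_eq_zero.1 (by exact_mod_cast h)
  funext k
  by_cases hk : k = j
  · rw [hk, hj']
  · exact hxy k hk

lemma hypCount_eq_countP {d : ℕ} (C : Multiset ((Fin d → ℝ) × ℝ)) (p : Fin d → ℝ) :
    hypCount d C p = C.countP fun H => H.1 ⬝ᵥ p = H.2 :=
  rfl

lemma hypCount_cons {d : ℕ} (H : (Fin d → ℝ) × ℝ) (C : Multiset ((Fin d → ℝ) × ℝ))
    (p : Fin d → ℝ) :
    hypCount d (H ::ₘ C) p = hypCount d C p + if H.1 ⬝ᵥ p = H.2 then 1 else 0 :=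
  Multiset.countP_cons _ _ _

lemma hypCount_map_sub_dotProduct {d : ℕ} (C : Multiset ((Fin d → ℝ) × ℝ)) (v p : Fin d → ℝ) :
    hypCount d (C.map fun H => (H.1, H.2 - H.1 ⬝ᵥ v)) p = hypCount d C (p + v) := by
  rw [hypCount_eq_countP, hypCount_eq_countP, Multiset.countP_map,
    ← Multiset.countP_eq_card_filter]
  refine Multiset.countP_congr rfl fun H _ => ?_
  rw [dotProduct_add, eq_sub_iff_add_eq]

lemma hypCount_filter_not {d : ℕ} {C : Multiset ((Fin d → ℝ) × ℝ)} {p : Fin d → ℝ}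
    {P : (Fin d → ℝ) × ℝ → Prop} (hP : ∀ H ∈ C, P H → H.1 ⬝ᵥ p ≠ H.2) :
    hypCount d (C.filter fun H => ¬ P H) p = hypCount d C p := by
  rw [hypCount_eq_countP, hypCount_eq_countP, Multiset.countP_filter]
  exact Multiset.countP_congr rfl fun H hH => propext
    ⟨fun h => h.1, fun h => ⟨h, fun hPH => hP H hH hPH h⟩⟩

lemma Multiset.countP_exists_le_sum {α ι : Type*} [Fintype ι] (s : Multiset α)
    (p : ι → α → Prop) [∀ i, DecidablePred (p i)] [DecidablePred fun a => ∃ i, p i a] :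
    s.countP (fun a => ∃ i, p i a) ≤ ∑ i, s.countP (p i) := by
  induction s using Multiset.induction_on with
  | empty => simp
  | cons a s ih =>
    simp only [Multiset.countP_cons, sum_add_distrib]
    split_ifs with h
    · obtain ⟨i, hi⟩ := h
      have := Finset.single_le_sum (f := fun j => if p j a then 1 else 0)
        (fun _ _ => Nat.zero_le _) (mem_univ i)
      simp only [if_pos hi] at this
      omega
    · omega

noncomputable def side (n : ℕ) : Fin 3 → (Fin 2 → ℝ) × ℝ :=
  ![(![1, 0], 0), (![0, 1], 0), (![-1, -1], 1 - n)]

lemma side_le_dotProduct {n : ℕ} {x : Fin 2 → ℤ} (hx : x ∈ TriGrid 2 n) (i : Fin 3) :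
    (side n i).2 ≤ (side n i).1 ⬝ᵥ toReal x := by
  rw [mem_TriGrid_two] at hx
  have hs : (x 0 : ℝ) + x 1 ≤ n - 1 := by exact_mod_cast hx.2.2
  rw [dotProduct_toReal_two]
  fin_cases i <;> simp [side] <;> [exact_mod_cast hx.1; exact_mod_cast hx.2.1; linarith]

-- Holds for the `i`-th side line, but also, e.g., for every line that misses `T_2(n)`.
def AlongSide (n : ℕ) (i : Fin 3) (H : (Fin 2 → ℝ) × ℝ) : Prop :=
  ∀ x ∈ TriGrid 2 n, H.1 ⬝ᵥ toReal x = H.2 → (side n i).1 ⬝ᵥ toReal x = (side n i).2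

lemma card_filter_dotProduct_eq_le {n : ℕ} {H : (Fin 2 → ℝ) × ℝ} (hH : H.1 ≠ 0)
    {S : Finset (Fin 2 → ℤ)} (hS : ∀ x ∈ S, x ∈ TriGrid 2 n) :
    #{x ∈ S | H.1 ⬝ᵥ toReal x = H.2} ≤ n := by
  have key : ∀ j k : Fin 2, k ≠ j → H.1 j ≠ 0 → #{x ∈ S | H.1 ⬝ᵥ toReal x = H.2} ≤ n := by
    intro j k hkj hj
    calc _ ≤ #(Icc (0 : ℤ) (n - 1)) := by
          refine card_le_card_of_injOn (· k) (fun x hx => ?_) (fun x hx y hy hxy => ?_)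
          · have hx := hS x (mem_filter.1 hx).1
            exact mem_Icc.2 ⟨hx.1 k, apply_le_of_mem_TriGrid hx k⟩
          · refine eq_of_dotProduct_toReal_eq (((mem_filter.1 hx).2).trans
              (mem_filter.1 hy).2.symm) hj fun k' hk' => ?_
            obtain rfl : k' = k := by fin_cases j <;> fin_cases k <;> fin_cases k' <;> simp_all
            exact hxy
      _ = n := by simp
  obtain ⟨j, hj⟩ := Function.ne_iff.1 hH
  fin_cases j
  · exact key 0 1 (by decide) hj
  · exact key 1 0 (by decide) hj

lemma card_filter_dotProduct_eq_le_two {n : ℕ} {H : (Fin 2 → ℝ) × ℝ} (hH : H.1 ≠ 0)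
    (hH' : ∀ i, ¬ AlongSide n i H) {S : Finset (Fin 2 → ℤ)}
    (hS : ∀ x ∈ S, x ∈ TriGrid 2 n ∧ ∃ i, (side n i).1 ⬝ᵥ toReal x = (side n i).2) :
    #{x ∈ S | H.1 ⬝ᵥ toReal x = H.2} ≤ 2 := by
  have hmid : ∀ x ∈ S, ∀ y ∈ S, ∀ z ∈ S, H.1 ⬝ᵥ toReal x = H.2 → H.1 ⬝ᵥ toReal z = H.2 →
      Sbtw ℝ (toReal x) (toReal y) (toReal z) → False := by
    intro x hx y hy z hz hxH hzH hxyz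
    obtain ⟨i, hi⟩ := (hS y hy).2
    exact hH' i fun p _ hpH => dotProduct_eq_of_sbtw hH hxyz hxH hzH
      (side_le_dotProduct (hS x hx).1 i) (side_le_dotProduct (hS z hz).1 i) hi hpH
  by_contra! h
  obtain ⟨x, y, z, hx, hy, hz, hxy, hxz, hyz⟩ := two_lt_card_iff.1 h
  rw [mem_filter] at hx hy hz
  have hcol : Collinear ℝ {toReal x, toReal y, toReal z} :=
    collinear_of_dotProduct_eq hH (c := H.2) (by
      rintro p (rfl | rfl | rfl)
      exacts [hx.2, hy.2, hz.2])
  have hne : ∀ {u v : Fin 2 → ℤ}, u ≠ v → toReal u ≠ toReal v := fun h => toReal_injective.ne h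
  rcases hcol.wbtw_or_wbtw_or_wbtw with h | h | h
  · exact hmid x hx.1 y hy.1 z hz.1 hx.2 hz.2 ⟨h, hne hxy.symm, hne hyz⟩
  · exact hmid y hy.1 z hz.1 x hx.1 hy.2 hx.2 ⟨h, hne hyz.symm, hne hxz.symm⟩
  · exact hmid z hz.1 x hx.1 y hy.1 hz.2 hy.2 ⟨h, hne hxz, hne hxy⟩

-- For `k < n - 1` these points run over the `i`-th side minus one of its ends, so the three
-- pieces partition the `3n - 3` lattice points of the boundary.
def boundaryPoint (n : ℕ) (i : Fin 3) (k : ℕ) : Fin 2 → ℤ :=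
  ![![0, (k : ℤ)], ![(k : ℤ) + 1, 0], ![(n : ℤ) - 2 - k, (k : ℤ) + 1]] i

def boundary (n : ℕ) : Finset (Fin 2 → ℤ) :=
  (univ ×ˢ range (n - 1)).image fun ik => boundaryPoint n ik.1 ik.2

lemma card_boundary (n : ℕ) : #(boundary n) = 3 * (n - 1) := by
  rw [boundary, card_image_of_injOn, card_product, card_univ, Fintype.card_fin, card_range]
  rintro ⟨i, k⟩ hk ⟨j, l⟩ hl h
  simp only [coe_product, coe_univ, coe_range, Set.mem_prod, Set.mem_univ, Set.mem_Iio,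
    true_and] at hk hl
  have h0 := congrFun h 0
  have h1 := congrFun h 1
  fin_cases i <;> fin_cases j <;> simp [boundaryPoint] at h0 h1 ⊢ <;> omega

lemma mem_boundary {n : ℕ} {x : Fin 2 → ℤ} (hx : x ∈ boundary n) :
    x ∈ TriGrid 2 n ∧ ∃ i, (side n i).1 ⬝ᵥ toReal x = (side n i).2 := by
  obtain ⟨⟨i, k⟩, hk, rfl⟩ := mem_image.1 hx
  rw [mem_product, mem_range] at hk
  refine ⟨?_, i, ?_⟩
  · rw [mem_TriGrid_two]
    fin_cases i <;> simp [boundaryPoint] <;> omega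
  · rw [dotProduct_toReal_two]
    fin_cases i <;> simp [boundaryPoint, side]
    ring

lemma card_filter_boundary_le {n : ℕ} {H : (Fin 2 → ℝ) × ℝ} (hH : H.1 ≠ 0) :
    #{x ∈ boundary n | H.1 ⬝ᵥ toReal x = H.2} ≤ if ∃ i, AlongSide n i H then n else 2 := by
  split_ifs with h
  · exact card_filter_dotProduct_eq_le hH fun x hx => (mem_boundary hx).1
  · exact card_filter_dotProduct_eq_le_two hH (not_exists.1 h) fun x hx => mem_boundary hx

lemma sum_hypCount_boundary_le (n : ℕ) {C : Multiset ((Fin 2 → ℝ) × ℝ)}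
    (hC : ∀ H ∈ C, H.1 ≠ 0) :
    ∑ x ∈ boundary n, hypCount 2 C (toReal x) ≤
      2 * Multiset.card C + (n - 2) * C.countP (fun H => ∃ i, AlongSide n i H) := by
  induction C using Multiset.induction_on with
  | empty => simp [hypCount]
  | cons H C ih =>
    have hH := card_filter_boundary_le (n := n) (hC H (Multiset.mem_cons_self H C))
    have ih := ih fun H' hH' => hC H' (Multiset.mem_cons_of_mem hH')
    rw [card_filter] at hH
    simp only [hypCount_cons, Multiset.countP_cons, Multiset.card_cons, sum_add_distrib]
    have hn : n ≤ 2 + (n - 2) := by omega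
    split_ifs at hH ⊢ <;> nlinarith

lemma three_mul_le_two_mul_card {n : ℕ} (hn : 2 ≤ n) {C : Multiset ((Fin 2 → ℝ) × ℝ)}
    (hC : ∀ H ∈ C, H.1 ≠ 0) (hcov : ∀ x ∈ TriGrid 2 n, 2 ≤ hypCount 2 C (toReal x))
    (hs : C.countP (fun H => ∃ i, AlongSide n i H) ≤ 3) :
    3 * n ≤ 2 * Multiset.card C := by
  have hlow : #(boundary n) * 2 ≤ ∑ x ∈ boundary n, hypCount 2 C (toReal x) :=
    card_nsmul_le_sum _ _ _ fun x hx => hcov x (mem_boundary hx).1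
  have hup := sum_hypCount_boundary_le n hC
  have hs' := Nat.mul_le_mul_left (n - 2) hs
  rw [card_boundary] at hlow
  omega

-- `T_2(n)` minus its `i`-th side is `shift i + T_2(n - 1)`.
def shift : Fin 3 → Fin 2 → ℤ := ![![1, 0], ![0, 1], 0]

lemma add_shift_mem_TriGrid {n : ℕ} {x : Fin 2 → ℤ} (hx : x ∈ TriGrid 2 (n - 1)) (i : Fin 3) :
    x + shift i ∈ TriGrid 2 n ∧ (side n i).1 ⬝ᵥ toReal (x + shift i) ≠ (side n i).2 := by
  rw [mem_TriGrid_two] at hx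
  refine ⟨?_, ?_⟩
  · rw [mem_TriGrid_two]
    fin_cases i <;> simp [shift] <;> omega
  · rw [dotProduct_toReal_two]
    have hs : x 0 + x 1 ≤ (n : ℤ) - 2 := by omega
    have hs : (x 0 : ℝ) + x 1 ≤ n - 2 := by exact_mod_cast hs
    have h0 : (0 : ℝ) ≤ x 0 := by exact_mod_cast hx.1
    have h1 : (0 : ℝ) ≤ x 1 := by exact_mod_cast hx.2.1
    fin_cases i <;> simp [shift, side] <;> linarith

lemma exists_twoCover_of_two_le_countP_alongSide {n : ℕ} {C : Multiset ((Fin 2 → ℝ) × ℝ)}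
    (hC : ∀ H ∈ C, H.1 ≠ 0) (hcov : ∀ x ∈ TriGrid 2 n, 2 ≤ hypCount 2 C (toReal x)) {i : Fin 3}
    (hi : 2 ≤ C.countP (AlongSide n i)) :
    ∃ C' : Multiset ((Fin 2 → ℝ) × ℝ), Multiset.card C' + 2 ≤ Multiset.card C ∧
      (∀ H ∈ C', H.1 ≠ 0) ∧ ∀ x ∈ TriGrid 2 (n - 1), 2 ≤ hypCount 2 C' (toReal x) := by
  refine ⟨(C.filter fun H => ¬ AlongSide n i H).map
    fun H => (H.1, H.2 - H.1 ⬝ᵥ toReal (shift i)), ?_, ?_, fun x hx => ?_⟩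
  · rw [Multiset.card_map, ← Multiset.countP_eq_card_filter,
      Multiset.card_eq_countP_add_countP (AlongSide n i) C]
    omega
  · simp only [Multiset.mem_map, Multiset.mem_filter]
    rintro _ ⟨H, ⟨hH, -⟩, rfl⟩
    exact hC H hH
  · obtain ⟨hmem, hside⟩ := add_shift_mem_TriGrid hx i
    rw [hypCount_map_sub_dotProduct, ← toReal_add,
      hypCount_filter_not fun H _ hH hon => hside (hH _ hmem hon)]
    exact hcov _ hmem

theorem stmt2_general (n : ℕ)
    (C : Multiset ((Fin 2 → ℝ) × ℝ))
    (hC : ∀ H ∈ C, H.1 ≠ 0)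
    (hcov : ∀ x ∈ TriGrid 2 n, 2 ≤ hypCount 2 C (toReal x)) :
    (3 * n + 1) / 2 ≤ Multiset.card C := by
  induction n generalizing C with
  | zero => simp
  | succ m ih =>
  rcases m with _ | n
  · exact (hcov 0 (by simp [mem_TriGrid_two])).trans (Multiset.countP_le_card _ _)
  by_cases hs : C.countP (fun H => ∃ i, AlongSide (n + 2) i H) ≤ 3
  · have := three_mul_le_two_mul_card (by omega) hC hcov hs
    omega
  obtain ⟨i, hi⟩ : ∃ i, 2 ≤ C.countP (AlongSide (n + 2) i) := by
    by_contra! h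
    have := (Multiset.countP_exists_le_sum C (AlongSide (n + 2))).trans
      (sum_le_sum fun i _ => Nat.le_of_lt_succ (h i))
    simp only [sum_const, card_univ, Fintype.card_fin, smul_eq_mul, mul_one] at this
    omega
  obtain ⟨C', hcard, hC', hcov'⟩ := exists_twoCover_of_two_le_countP_alongSide hC hcov hi
  have := ih C' hC' hcov'
  omega

theorem stmt2 (n : ℕ) (hn : 2 ≤ n)
    (C : Multiset ((Fin 2 → ℝ) × ℝ))
    (hC : ∀ H ∈ C, H.1 ≠ 0)
    (hcov : ∀ x ∈ TriGrid 2 n, 2 ≤ hypCount 2 C (toReal x)) :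
    (3 * n + 1) / 2 ≤ Multiset.card C :=
  stmt2_general n C hC hcov
end

section
/- For all n ≥ 2, there exists a multiset of ⌈3n/2⌉ lines in ℝ² covering every point of T_2(n) at least twice. -/
open scoped Classical

/-!
Take the lines `x = i` and `y = i` for `i < ⌈n/2⌉` and `x + y = k` for `⌈n/2⌉ ≤ k < n`, which are
`⌈3n/2⌉` lines (`⌈n/2⌉ = (n + 1) / 2`). A grid point `(a, b)` with `a + b < n` missed by one of the
axis-parallel families has, say, `a ≥ ⌈n/2⌉`; then `b < ⌈n/2⌉` and `⌈n/2⌉ ≤ a + b < n`, so it still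
lies on two of the lines.
-/

section ParallelLines

variable {d : ℕ}

theorem hypCount_add (C C' : Multiset ((Fin d → ℝ) × ℝ)) (p : Fin d → ℝ) :
    hypCount d (C + C') p = hypCount d C p + hypCount d C' p :=
  Multiset.countP_add _ _ _

def parallelLines (a : Fin d → ℝ) (s : Finset ℕ) : Multiset ((Fin d → ℝ) × ℝ) :=
  s.val.map fun k : ℕ => (a, (k : ℝ))

theorem hypCount_parallelLines_of_eq {a p : Fin d → ℝ} {j : ℕ} (h : ∑ i, a i * p i = j)
    (s : Finset ℕ) : hypCount d (parallelLines a s) p = if j ∈ s then 1 else 0 := by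
  rw [hypCount, parallelLines, Multiset.countP_map]
  simp only [h, Nat.cast_inj]
  rw [← Finset.filter_val, Finset.card_val, Finset.filter_eq]
  split_ifs <;> rfl

theorem mem_parallelLines {a : Fin d → ℝ} {s : Finset ℕ} {H : (Fin d → ℝ) × ℝ}
    (hH : H ∈ parallelLines a s) : H.1 = a := by
  obtain ⟨k, -, rfl⟩ := Multiset.mem_map.1 hH
  rfl

end ParallelLines

noncomputable def doubleCover (n : ℕ) : Multiset ((Fin 2 → ℝ) × ℝ) :=
  parallelLines ![1, 0] (Finset.range ((n + 1) / 2)) +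
    parallelLines ![0, 1] (Finset.range ((n + 1) / 2)) +
    parallelLines ![1, 1] (Finset.Ico ((n + 1) / 2) n)

theorem card_doubleCover (n : ℕ) : Multiset.card (doubleCover n) = (3 * n + 1) / 2 := by
  simp only [doubleCover, parallelLines, Multiset.card_add, Multiset.card_map, Finset.card_val,
    Finset.card_range, Nat.card_Ico]
  omega

theorem normal_ne_zero_of_mem_doubleCover {n : ℕ} {H : (Fin 2 → ℝ) × ℝ}
    (hH : H ∈ doubleCover n) : H.1 ≠ 0 := by
  simp only [doubleCover, Multiset.mem_add] at hH
  rcases hH with (hH | hH) | hH <;> rw [mem_parallelLines hH] <;> simp [funext_iff]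

theorem hypCount_doubleCover {n a b : ℕ} {p : Fin 2 → ℝ} (ha : p 0 = a) (hb : p 1 = b) :
    hypCount 2 (doubleCover n) p =
      (if a < (n + 1) / 2 then 1 else 0) + (if b < (n + 1) / 2 then 1 else 0) +
        (if (n + 1) / 2 ≤ a + b ∧ a + b < n then 1 else 0) := by
  simp only [doubleCover, hypCount_add]
  rw [hypCount_parallelLines_of_eq (j := a), hypCount_parallelLines_of_eq (j := b),
    hypCount_parallelLines_of_eq (j := a + b)]
  · simp only [Finset.mem_range, Finset.mem_Ico]
  all_goals simp [Fin.sum_univ_two, ha, hb]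

theorem exists_natCast_of_mem_triGrid_two {n : ℕ} {x : Fin 2 → ℤ} (hx : x ∈ TriGrid 2 n) :
    ∃ a b : ℕ, a + b < n ∧ toReal x 0 = a ∧ toReal x 1 = b := by
  obtain ⟨hnonneg, hsum⟩ := hx
  rw [Fin.sum_univ_two] at hsum
  have h0 := hnonneg 0
  have h1 := hnonneg 1
  refine ⟨(x 0).toNat, (x 1).toNat, by omega, ?_, ?_⟩
  · simp only [toReal]; exact_mod_cast (Int.toNat_of_nonneg h0).symm
  · simp only [toReal]; exact_mod_cast (Int.toNat_of_nonneg h1).symm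

theorem stmt3_general (n : ℕ) :
    ∃ C : Multiset ((Fin 2 → ℝ) × ℝ),
      Multiset.card C = (3 * n + 1) / 2 ∧ (∀ H ∈ C, H.1 ≠ 0) ∧
      (∀ x ∈ TriGrid 2 n, 2 ≤ hypCount 2 C (toReal x)) := by
  refine ⟨doubleCover n, card_doubleCover n, fun H => normal_ne_zero_of_mem_doubleCover, ?_⟩
  intro x hx
  obtain ⟨a, b, hab, ha, hb⟩ := exists_natCast_of_mem_triGrid_two hx
  rw [hypCount_doubleCover ha hb]
  split_ifs <;> omega

theorem stmt3 (n : ℕ) (hn : 2 ≤ n) :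
    ∃ C : Multiset ((Fin 2 → ℝ) × ℝ),
      Multiset.card C = (3 * n + 1) / 2 ∧ (∀ H ∈ C, H.1 ≠ 0) ∧
      (∀ x ∈ TriGrid 2 n, 2 ≤ hypCount 2 C (toReal x)) :=
  stmt3_general n
end

section
/- For all n ≥ 2, there exists a multiset of exactly 3n lines in ℝ² covering every point of T_2(n) at least four times. Explicitly, one may take the lines x = i, y = i, and x + y = n−1−i each with multiplicity two for i ∈ {0,…,⌊(n−1)/3⌋}, and with multiplicity one for i ∈ {⌊(n−1)/3⌋+1,…,⌊2n/3⌋−1}. -/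
open scoped Classical

/-- The vertical line `x = c`. -/
noncomputable def lineX (c : ℕ) : (Fin 2 → ℝ) × ℝ := (![1, 0], (c : ℝ))

/-- The horizontal line `y = c`. -/
noncomputable def lineY (c : ℕ) : (Fin 2 → ℝ) × ℝ := (![0, 1], (c : ℝ))

/-- The diagonal line `x + y = n - 1 - c`. -/
noncomputable def lineD (n c : ℕ) : (Fin 2 → ℝ) × ℝ := (![1, 1], (n : ℝ) - 1 - (c : ℝ))

/-- The lines `x = i`, `y = i`, `x + y = n - 1 - i`. -/
noncomputable def triple (n i : ℕ) : Multiset ((Fin 2 → ℝ) × ℝ) :=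
  {lineX i, lineY i, lineD n i}

/-- The explicit 4-cover: the lines `x = i`, `y = i`, `x + y = n - 1 - i` with multiplicity two
for `i ∈ {0, …, ⌊(n-1)/3⌋}` and multiplicity one for `i ∈ {⌊(n-1)/3⌋ + 1, …, ⌊2n/3⌋ - 1}`. -/
noncomputable def cover6 (n : ℕ) : Multiset ((Fin 2 → ℝ) × ℝ) :=
  2 • ((Finset.range ((n - 1) / 3 + 1)).val.bind (fun i => triple n i)) +
  (Finset.Ico ((n - 1) / 3 + 1) (2 * n / 3)).val.bind (fun i => triple n i)

open Finset

theorem Multiset.countP_bind {α β : Type*} (p : β → Prop) [DecidablePred p] (s : Multiset α)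
    (f : α → Multiset β) : (s.bind f).countP p = (s.map fun a => (f a).countP p).sum := by
  simp only [countP_eq_card_filter, filter_bind, card_bind, Function.comp_def]

def cover6Mult (n i : ℕ) : ℕ :=
  2 * (if i ∈ range ((n - 1) / 3 + 1) then 1 else 0) +
    (if i ∈ Ico ((n - 1) / 3 + 1) (2 * n / 3) then 1 else 0)

theorem card_cover6 {n : ℕ} (hn : 2 ≤ n) : Multiset.card (cover6 n) = 3 * n := by
  have card_triple (i : ℕ) : Multiset.card (triple n i) = 3 := rfl
  simp only [cover6, Multiset.card_add, Multiset.card_nsmul, Multiset.card_bind,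
    Function.comp_def, card_triple, Multiset.map_const', Multiset.sum_replicate,
    ← Finset.card_def, card_range, Nat.card_Ico, smul_eq_mul]
  omega

theorem countP_triple (n i : ℕ) (p : Fin 2 → ℝ) :
    (triple n i).countP (fun H => ∑ j, H.1 j * p j = H.2) =
      (if p 0 = i then 1 else 0) + (if p 1 = i then 1 else 0) +
      (if p 0 + p 1 = (n : ℝ) - 1 - i then 1 else 0) := by
  rw [show triple n i = lineX i ::ₘ lineY i ::ₘ lineD n i ::ₘ 0 from rfl]
  simp only [Multiset.countP_cons, Multiset.countP_zero, lineX, lineY, lineD, Fin.sum_univ_two,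
    Matrix.cons_val_zero, Matrix.cons_val_one, one_mul, zero_mul, add_zero, zero_add]
  omega

theorem hypCount_cover6 {n a b c : ℕ} (habc : a + b + c + 1 = n) :
    hypCount 2 (cover6 n) ![a, b] = cover6Mult n a + cover6Mult n b + cover6Mult n c := by
  have diagonal_iff (i : ℕ) : (a + b : ℝ) = n - 1 - i ↔ c = i := by
    rw [← habc]; push_cast
    constructor
    · intro h; exact_mod_cast (by linarith : (c : ℝ) = i)
    · rintro rfl; ring
  simp only [hypCount, cover6, Multiset.countP_add, Multiset.countP_nsmul, Multiset.countP_bind,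
    ← Finset.sum_eq_multiset_sum, countP_triple, Matrix.cons_val_zero, Matrix.cons_val_one,
    diagonal_iff, Nat.cast_inj, sum_add_distrib, sum_ite_eq, cover6Mult]
  ring

/-- Some coordinate is at most `⌊(n-1)/3⌋` because `3 (⌊(n-1)/3⌋ + 1) ≥ n`, and then the other two
lie below `⌊2n/3⌋` because `⌊(n-1)/3⌋ + ⌊2n/3⌋ ≥ n - 1`. -/
theorem four_le_cover6Mult_add {n a b c : ℕ} (habc : a + b + c + 1 = n) :
    4 ≤ cover6Mult n a + cover6Mult n b + cover6Mult n c := by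
  simp only [cover6Mult, mem_range, mem_Ico]
  split_ifs <;> omega

theorem stmt6 (n : ℕ) (hn : 2 ≤ n) :
    Multiset.card (cover6 n) = 3 * n ∧
    (∀ x ∈ TriGrid 2 n, 4 ≤ hypCount 2 (cover6 n) (toReal x)) := by
  refine ⟨card_cover6 hn, fun x ⟨hpos, hsum⟩ => ?_⟩
  lift x 0 to ℕ using hpos 0 with a ha
  lift x 1 to ℕ using hpos 1 with b hb
  have hx : toReal x = ![(a : ℝ), b] := by
    ext i; fin_cases i <;> simp [toReal, ← ha, ← hb]
  rw [Fin.sum_univ_two, ← ha, ← hb] at hsum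
  have habc : a + b + (n - 1 - (a + b)) + 1 = n := by omega
  rw [hx, hypCount_cover6 habc]
  exact four_le_cover6Mult_add habc
end

section
/- For every integer j ≥ 1, the minimum total weight of a fractional line cover of T_2(3j+1) equals 2j+1. That is, there is an assignment of nonnegative weights to affine lines in ℝ² with total weight 2j+1 such that for every point p of T_2(3j+1) the sum of weights of lines through p is at least 1, and no such assignment has total weight less than 2j+1. -/
open scoped Classical

/-- The total weight of a finitely-supported weight assignment on hyperplanes. -/
noncomputable def fracTotal {d : ℕ} (w : ((Fin d → ℝ) × ℝ) →₀ ℝ) : ℝ :=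
  ∑ H ∈ w.support, w H

/-- The total weight of hyperplanes passing through the point `p`. -/
noncomputable def fracAt {d : ℕ} (w : ((Fin d → ℝ) × ℝ) →₀ ℝ) (p : Fin d → ℝ) : ℝ :=
  ∑ H ∈ w.support.filter (fun H => ∑ i, H.1 i * p i = H.2), w H

/-- `w` is a fractional cover of `T_d(n)`: nonnegative weights on genuine hyperplanes such that
every grid point lies on hyperplanes of total weight at least `1`. -/
def IsFracCover (d n : ℕ) (w : ((Fin d → ℝ) × ℝ) →₀ ℝ) : Prop :=
  (∀ H, 0 ≤ w H) ∧ (∀ H ∈ w.support, H.1 ≠ 0) ∧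
  ∀ x ∈ TriGrid d n, 1 ≤ fracAt w (toReal x)

/-!
Upper bound: give weight `(2j - a) / 3j` to each of the lines `x = a`, `y = a` and
`x + y = 3j - a` for `0 ≤ a < 2j`. The barycentric coordinates `(x, y, 3j - x - y)` of a grid
point sum to `3j`, so the point receives at least `∑ (2j - c) / 3j = 1`; the total weight is
`3 · j(2j + 1) / 3j = 2j + 1`.

Lower bound, by LP duality: give each point `(x, y)` of the hexagon `0 ≤ x, y ≤ 2j`,
`j ≤ x + y ≤ 3j` the weight `(|j - x| + |j - y| + |x + y - 2j|) / 2j(j + 1)`. A line parallel to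
a side of the triangle carries total weight at most `1`; any other line meets the hexagon in at
most `j + 1` points, each of weight at most `2j / 2j(j + 1)`. The total weight is `2j + 1`.
-/

open Finset

section FractionalCover

variable {d : ℕ}

lemma fracAt_eq_sum_ite (w : ((Fin d → ℝ) × ℝ) →₀ ℝ) (p : Fin d → ℝ) :
    fracAt w p = w.sum fun H c => if ∑ i, H.1 i * p i = H.2 then c else 0 :=
  sum_filter _ _

lemma sum_le_fracTotal {ι : Type*} {w : ((Fin d → ℝ) × ℝ) →₀ ℝ} (hw : ∀ H, 0 ≤ w H)
    {s : Finset ι} {pt : ι → Fin d → ℝ} {y : ι → ℝ} (hy : ∀ i ∈ s, 0 ≤ y i)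
    (hcov : ∀ i ∈ s, 1 ≤ fracAt w (pt i))
    (hline : ∀ H ∈ w.support, ∑ i ∈ s with ∑ k, H.1 k * pt i k = H.2, y i ≤ 1) :
    ∑ i ∈ s, y i ≤ fracTotal w :=
  calc ∑ i ∈ s, y i ≤ ∑ i ∈ s, y i * fracAt w (pt i) :=
        sum_le_sum fun i hi => le_mul_of_one_le_right (hy i hi) (hcov i hi)
    _ = ∑ H ∈ w.support, (∑ i ∈ s with ∑ k, H.1 k * pt i k = H.2, y i) * w H := by
        simp only [fracAt, sum_filter, mul_sum, sum_mul, ite_mul, zero_mul, mul_ite, mul_zero]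
        exact sum_comm
    _ ≤ fracTotal w :=
        sum_le_sum fun H hH => mul_le_of_le_one_left (hw H) (hline H hH)

variable {ι : Type*} (s : Finset ι) (H : ι → (Fin d → ℝ) × ℝ) (c : ι → ℝ)

lemma fracTotal_sum_single : fracTotal (∑ i ∈ s, Finsupp.single (H i) (c i)) = ∑ i ∈ s, c i := by
  change (∑ i ∈ s, Finsupp.single (H i) (c i)).sum (fun _ c => c) = _
  rw [← Finsupp.sum_finsetSum_index (fun _ => rfl) fun _ _ _ => rfl]
  simp only [Finsupp.sum_single_index]

lemma fracAt_sum_single (p : Fin d → ℝ) :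
    fracAt (∑ i ∈ s, Finsupp.single (H i) (c i)) p =
      ∑ i ∈ s, if ∑ k, (H i).1 k * p k = (H i).2 then c i else 0 := by
  rw [fracAt_eq_sum_ite, ← Finsupp.sum_finsetSum_index (fun _ => by simp) fun _ _ _ => by
    split_ifs <;> simp]
  simp only [Finsupp.sum_single_index, ite_self]

lemma isFracCover_sum_single {n : ℕ} (hc : ∀ i ∈ s, 0 ≤ c i) (hH : ∀ i ∈ s, (H i).1 ≠ 0)
    (hcov : ∀ x ∈ TriGrid d n,
      1 ≤ ∑ i ∈ s, if ∑ k, (H i).1 k * toReal x k = (H i).2 then c i else 0) :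
    IsFracCover d n (∑ i ∈ s, Finsupp.single (H i) (c i)) := by
  refine ⟨fun G => ?_, fun G hG => ?_, fun x hx => (fracAt_sum_single s H c _).symm ▸ hcov x hx⟩
  · rw [Finsupp.finsetSum_apply]
    exact sum_nonneg fun i hi => by
      rw [Finsupp.single_apply]; split_ifs <;> simp [hc i hi]
  · classical
    obtain ⟨i, hi, hG⟩ := mem_biUnion.1 (Finsupp.support_finsetSum hG)
    rw [Finsupp.mem_support_single] at hG
    exact hG.1 ▸ hH i hi

end FractionalCover

lemma sum_Icc_abs_sub_mul_two {c l u : ℤ} (hl : l ≤ c) (hu : c ≤ u) :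
    (∑ t ∈ Icc l u, |c - t|) * 2 = (c - l) * (c - l + 1) + (u - c) * (u - c + 1) := by
  induction u, hu using Int.leInduction with
  | base =>
    induction l, hl using Int.leInductionDown with
    | base => simp
    | pred l hl ih =>
      rw [show Icc (l - 1) c = insert (l - 1) (Icc l c) by ext; simp; omega,
        sum_insert (by simp), add_mul, ih, abs_of_nonneg (by omega)]
      ring
  | succ u hu ih =>
    rw [show Icc l (u + 1) = insert (u + 1) (Icc l u) by ext; simp; omega,
      sum_insert (by simp), add_mul, ih, abs_of_nonpos (by omega)]
    ring

lemma card_le_of_two_le_abs_sub {α : Type*} {s : Finset α} {f : α → ℤ} {A m : ℤ} (hm : 0 ≤ m)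
    (hf : ∀ q ∈ s, A ≤ f q ∧ f q ≤ A + 2 * m)
    (hgap : ∀ q ∈ s, ∀ r ∈ s, q ≠ r → 2 ≤ |f q - f r|) :
    (s.card : ℤ) ≤ m + 1 := by
  have hmaps : Set.MapsTo (fun q => (f q - A) / 2) s (Icc 0 m) := fun q hq => by
    have := hf q hq
    simp only [coe_Icc, Set.mem_Icc]
    omega
  have hinj : Set.InjOn (fun q => (f q - A) / 2) s := fun q hq r hr hqr => by
    by_contra hne
    have := hgap q hq r hr hne
    rw [le_abs] at this
    simp only at hqr
    omega
  have := card_le_card_of_injOn _ hmaps hinj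
  rw [Int.card_Icc] at this
  omega

lemma two_le_abs_of_mul_eq {α β : ℝ} {m n : ℤ} (hαβ : |α| < |β|) (h : α * m = β * n)
    (hn : n ≠ 0) : 2 ≤ |m| := by
  have hn' : (1 : ℝ) ≤ |(n : ℝ)| := by exact_mod_cast Int.one_le_abs hn
  have hm' : (1 : ℝ) < |(m : ℝ)| := by
    by_contra! hm
    have := congrArg abs h
    rw [abs_mul, abs_mul] at this
    nlinarith [abs_nonneg α, abs_nonneg β]
  have : (1 : ℤ) < |m| := by exact_mod_cast hm'
  omega

namespace Hexagon

noncomputable def points (j : ℤ) : Finset (ℤ × ℤ) :=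
  (Icc 0 (2 * j) ×ˢ Icc 0 (2 * j)).filter fun q => j ≤ q.1 + q.2 ∧ q.1 + q.2 ≤ 3 * j

def weight (j : ℤ) (q : ℤ × ℤ) : ℤ :=
  |j - q.1| + |j - q.2| + |q.1 + q.2 - 2 * j|

variable {j : ℤ}

lemma mem_points {q : ℤ × ℤ} : q ∈ points j ↔
    0 ≤ q.1 ∧ q.1 ≤ 2 * j ∧ 0 ≤ q.2 ∧ q.2 ≤ 2 * j ∧ j ≤ q.1 + q.2 ∧ q.1 + q.2 ≤ 3 * j := by
  simp only [points, mem_filter, mem_product, mem_Icc, and_assoc]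

lemma weight_nonneg (q : ℤ × ℤ) : 0 ≤ weight j q := by
  unfold weight; positivity

lemma weight_le {q : ℤ × ℤ} (hq : q ∈ points j) : weight j q ≤ 2 * j := by
  rw [mem_points] at hq
  unfold weight
  rcases abs_cases (j - q.1) with h1 | h1 <;> rcases abs_cases (j - q.2) with h2 | h2 <;>
    rcases abs_cases (q.1 + q.2 - 2 * j) with h3 | h3 <;> omega

lemma sum_weight_column (hj : 0 ≤ j) {a : ℤ} (h0 : 0 ≤ a) (ha : a ≤ 2 * j) :
    ∑ q ∈ (points j).filter (·.1 = a), weight j q = 2 * j * (j + 1) := by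
  set l := max 0 (j - a)
  set u := min (2 * j) (3 * j - a)
  have hcol : (points j).filter (·.1 = a) = (Icc l u).map ⟨(a, ·), Prod.mk_right_injective a⟩ := by
    ext ⟨x, y⟩
    simp only [mem_filter, mem_points, mem_map, mem_Icc, Function.Embedding.coeFn_mk,
      Prod.mk.injEq]
    constructor
    · rintro ⟨h, rfl⟩
      exact ⟨y, by omega, rfl, rfl⟩
    · rintro ⟨y, hy, rfl, rfl⟩
      omega
  have hweight : ∀ y, weight j (a, y) = |j - a| + |j - y| + |(2 * j - a) - y| := fun y => by
    rw [weight, abs_sub_comm (2 * j - a)]; ring_nf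
  have hj' := sum_Icc_abs_sub_mul_two (c := j) (l := l) (u := u) (by omega) (by omega)
  have ha' := sum_Icc_abs_sub_mul_two (c := 2 * j - a) (l := l) (u := u) (by omega) (by omega)
  have hcard : ((Icc l u).card : ℤ) = u + 1 - l := by rw [Int.card_Icc]; omega
  rw [hcol, sum_map]
  simp only [Function.Embedding.coeFn_mk, hweight, sum_add_distrib, sum_const, nsmul_eq_mul, hcard]
  rcases le_total a j with h | h
  · rw [abs_of_nonneg (by omega)]
    rw [show l = j - a by omega, show u = 2 * j by omega] at *
    nlinarith
  · rw [abs_of_nonpos (by omega)]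
    rw [show l = 0 by omega, show u = 3 * j - a by omega] at *
    nlinarith

lemma sum_weight_row (hj : 0 ≤ j) {b : ℤ} (h0 : 0 ≤ b) (hb : b ≤ 2 * j) :
    ∑ q ∈ (points j).filter (·.2 = b), weight j q = 2 * j * (j + 1) := by
  rw [← sum_weight_column hj h0 hb]
  refine sum_nbij' Prod.swap Prod.swap ?_ ?_ (fun _ _ => rfl) (fun _ _ => rfl) ?_ <;>
    simp only [mem_filter, mem_points, Prod.fst_swap, Prod.snd_swap]
  · omega
  · omega
  · intro q _; simp only [weight, Prod.fst_swap, Prod.snd_swap]; ring_nf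

lemma sum_weight_antidiagonal (hj : 0 ≤ j) {s : ℤ} (h0 : j ≤ s) (hs : s ≤ 3 * j) :
    ∑ q ∈ (points j).filter (fun q => q.1 + q.2 = s), weight j q = 2 * j * (j + 1) := by
  rw [← sum_weight_column hj (a := 3 * j - s) (by omega) (by omega)]
  let σ : ℤ × ℤ → ℤ × ℤ := fun q => (3 * j - q.1 - q.2, q.2)
  have hσ : ∀ q, σ (σ q) = q := fun q => by simp only [σ]; ext <;> ring
  refine sum_nbij' σ σ ?_ ?_ (fun q _ => hσ q) (fun q _ => hσ q) ?_ <;>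
    simp only [σ, mem_filter, mem_points]
  · omega
  · omega
  · intro q _; simp only [weight]; ring_nf

lemma sum_weight (hj : 0 ≤ j) :
    ∑ q ∈ points j, weight j q = 2 * j * (j + 1) * (2 * j + 1) := by
  have hmaps : ∀ q ∈ points j, q.1 ∈ Icc 0 (2 * j) := fun q hq => by
    rw [mem_points] at hq; rw [mem_Icc]; omega
  have hcolumns : ∀ a ∈ Icc 0 (2 * j),
      ∑ q ∈ (points j).filter (·.1 = a), weight j q = 2 * j * (j + 1) := fun a ha => by
    rw [mem_Icc] at ha; exact sum_weight_column hj ha.1 ha.2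
  rw [← sum_fiberwise_of_maps_to hmaps, sum_congr rfl hcolumns, sum_const, Int.card_Icc,
    nsmul_eq_mul, Int.toNat_of_nonneg (by omega)]
  ring

/-- A line in none of the three directions of the grid meets the hexagon in points whose `x`,
`y` or `x + y` coordinates are pairwise at least `2` apart. -/
lemma card_filter_line_le (hj : 0 ≤ j) {a₀ a₁ b : ℝ} (h₀ : a₀ ≠ 0) (h₁ : a₁ ≠ 0)
    (h₀₁ : a₀ ≠ a₁) :
    (((points j).filter fun q => a₀ * q.1 + a₁ * q.2 = b).card : ℤ) ≤ j + 1 := by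
  set L := (points j).filter fun q => a₀ * q.1 + a₁ * q.2 = b
  have hL : ∀ q ∈ L, q ∈ points j ∧ a₀ * q.1 + a₁ * q.2 = b := fun q hq => mem_filter.1 hq
  have hdir : ∀ r ∈ L, ∀ s ∈ L, r ≠ s →
      a₀ * ((r.1 - s.1 : ℤ) : ℝ) = -a₁ * ((r.2 - s.2 : ℤ) : ℝ) ∧ r.1 ≠ s.1 ∧ r.2 ≠ s.2 := by
    intro r hr s hs hrs
    have h : a₀ * ((r.1 - s.1 : ℤ) : ℝ) = -a₁ * ((r.2 - s.2 : ℤ) : ℝ) := by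
      push_cast; linarith [(hL r hr).2, (hL s hs).2]
    refine ⟨h, fun h1 => hrs ?_, fun h2 => hrs ?_⟩
    · have : ((r.2 - s.2 : ℤ) : ℝ) = 0 := by simpa [h1, h₁] using h.symm
      exact Prod.ext h1 (by exact_mod_cast sub_eq_zero.1 (by exact_mod_cast this))
    · have : ((r.1 - s.1 : ℤ) : ℝ) = 0 := by simpa [h2, h₀] using h
      exact Prod.ext (by exact_mod_cast sub_eq_zero.1 (by exact_mod_cast this)) h2
  rcases lt_trichotomy |a₀| |a₁| with hlt | heq | hgt
  · refine card_le_of_two_le_abs_sub (f := Prod.fst) (A := 0) hj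
      (fun q hq => by have := mem_points.1 (hL q hq).1; omega) fun r hr s hs hrs => ?_
    obtain ⟨h, -, h2⟩ := hdir r hr s hs hrs
    exact two_le_abs_of_mul_eq (by rwa [abs_neg]) h (sub_ne_zero.2 h2)
  · have hneg : a₀ = -a₁ := (abs_eq_abs.1 heq).resolve_left h₀₁
    refine card_le_of_two_le_abs_sub (f := fun q => q.1 + q.2) (A := j) hj
      (fun q hq => by have := mem_points.1 (hL q hq).1; omega) fun r hr s hs hrs => ?_
    obtain ⟨h, h1, -⟩ := hdir r hr s hs hrs
    rw [hneg, mul_right_inj' (neg_ne_zero.2 h₁), Int.cast_inj] at h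
    rw [Int.abs_eq_natAbs]
    omega
  · refine card_le_of_two_le_abs_sub (f := Prod.snd) (A := 0) hj
      (fun q hq => by have := mem_points.1 (hL q hq).1; omega) fun r hr s hs hrs => ?_
    obtain ⟨h, h1, -⟩ := hdir r hr s hs hrs
    exact two_le_abs_of_mul_eq (by rwa [abs_neg]) h.symm (sub_ne_zero.2 h1)

lemma sum_weight_filter_line_le (hj : 0 ≤ j) {a₀ a₁ b : ℝ} (ha : a₀ ≠ 0 ∨ a₁ ≠ 0) :
    ∑ q ∈ (points j).filter (fun q => a₀ * q.1 + a₁ * q.2 = b), weight j q ≤ 2 * j * (j + 1) := by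
  set L := (points j).filter fun q => a₀ * q.1 + a₁ * q.2 = b
  obtain hempty | ⟨q₀, hq₀⟩ := L.eq_empty_or_nonempty
  · rw [hempty, sum_empty]; positivity
  have hL : ∀ q ∈ L, q ∈ points j ∧ a₀ * q.1 + a₁ * q.2 = b := fun q hq => mem_filter.1 hq
  have hq₀' := mem_points.1 (hL q₀ hq₀).1
  have hsub : ∀ P : ℤ × ℤ → Prop, [DecidablePred P] → (∀ q ∈ L, P q) →
      ∑ q ∈ L, weight j q ≤ ∑ q ∈ (points j).filter P, weight j q := fun P _ hP =>
    sum_le_sum_of_subset_of_nonneg (fun q hq => mem_filter.2 ⟨(hL q hq).1, hP q hq⟩)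
      fun q _ _ => weight_nonneg q
  by_cases h₁ : a₁ = 0
  · have h₀ : a₀ ≠ 0 := ha.resolve_right (not_not.2 h₁)
    refine (hsub (·.1 = q₀.1) fun q hq => ?_).trans_eq (sum_weight_column hj (by omega) (by omega))
    have := (hL q hq).2.trans (hL q₀ hq₀).2.symm
    simp only [h₁, zero_mul, add_zero, mul_right_inj' h₀, Int.cast_inj] at this
    exact this
  by_cases h₀ : a₀ = 0
  · refine (hsub (·.2 = q₀.2) fun q hq => ?_).trans_eq (sum_weight_row hj (by omega) (by omega))
    have := (hL q hq).2.trans (hL q₀ hq₀).2.symm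
    simp only [h₀, zero_mul, zero_add, mul_right_inj' h₁, Int.cast_inj] at this
    exact this
  by_cases h₀₁ : a₀ = a₁
  · refine (hsub (fun q => q.1 + q.2 = q₀.1 + q₀.2) fun q hq => ?_).trans_eq
      (sum_weight_antidiagonal hj (by omega) (by omega))
    have := (hL q hq).2.trans (hL q₀ hq₀).2.symm
    rw [h₀₁, ← mul_add, ← mul_add, mul_right_inj' h₁] at this
    exact_mod_cast this
  calc ∑ q ∈ L, weight j q ≤ L.card • (2 * j) :=
        sum_le_card_nsmul _ _ _ fun q hq => weight_le (hL q hq).1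
    _ ≤ (j + 1) * (2 * j) := by
        rw [nsmul_eq_mul]
        exact mul_le_mul_of_nonneg_right (card_filter_line_le hj h₀ h₁ h₀₁) (by omega)
    _ = 2 * j * (j + 1) := by ring

end Hexagon

lemma Hexagon.mem_triGrid {j : ℕ} {q : ℤ × ℤ} (hq : q ∈ Hexagon.points j) :
    ![q.1, q.2] ∈ TriGrid 2 (3 * j + 1) := by
  rw [Hexagon.mem_points] at hq
  refine ⟨fun i => by fin_cases i <;> simp <;> omega, ?_⟩
  simp only [Fin.sum_univ_two, Matrix.cons_val_zero, Matrix.cons_val_one]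
  push_cast
  omega

lemma two_mul_add_one_le_fracTotal {j : ℕ} (hj : 1 ≤ j) {w : ((Fin 2 → ℝ) × ℝ) →₀ ℝ}
    (hw : IsFracCover 2 (3 * j + 1) w) : 2 * j + 1 ≤ fracTotal w := by
  obtain ⟨hw0, hwne, hwcov⟩ := hw
  have hD : (0 : ℝ) < 2 * j * (j + 1) := by positivity
  have hon : ∀ (H : (Fin 2 → ℝ) × ℝ) (q : ℤ × ℤ),
      (∑ k, H.1 k * toReal ![q.1, q.2] k = H.2) ↔ H.1 0 * q.1 + H.1 1 * q.2 = H.2 := by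
    simp [toReal, Fin.sum_univ_two]
  calc (2 * j + 1 : ℝ)
      = ∑ q ∈ Hexagon.points j, (Hexagon.weight j q : ℝ) / (2 * j * (j + 1)) := by
        rw [← sum_div, ← Int.cast_sum, Hexagon.sum_weight (by positivity)]
        push_cast
        field_simp
    _ ≤ fracTotal w := by
        refine sum_le_fracTotal hw0
          (fun q _ => div_nonneg (Int.cast_nonneg_iff.2 (Hexagon.weight_nonneg q)) hD.le)
          (fun q hq => hwcov _ (Hexagon.mem_triGrid hq)) fun H hH => ?_
        have hH0 : H.1 0 ≠ 0 ∨ H.1 1 ≠ 0 := by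
          by_contra! h
          exact hwne H hH (funext fun i => by fin_cases i <;> simp [h])
        simp only [hon]
        rw [← sum_div, div_le_one hD]
        exact_mod_cast Hexagon.sum_weight_filter_line_le (by positivity) hH0

/-- The line on which the `k`-th barycentric coordinate `baryCoord j x k` equals `a`. -/
def baryLine (j : ℕ) (k : Fin 3) (a : ℕ) : (Fin 2 → ℝ) × ℝ :=
  (![![1, 0], ![0, 1], ![-1, -1]] k, a - ![0, 0, 3 * j] k)

def baryCoord (j : ℕ) (x : Fin 2 → ℤ) : Fin 3 → ℤ :=
  ![x 0, x 1, 3 * j - x 0 - x 1]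

lemma mem_baryLine_iff (j : ℕ) (k : Fin 3) (a : ℕ) (x : Fin 2 → ℤ) :
    ∑ i, (baryLine j k a).1 i * toReal x i = (baryLine j k a).2 ↔ baryCoord j x k = a := by
  rw [← Int.cast_inj (α := ℝ)]
  fin_cases k <;> simp [baryLine, baryCoord, toReal, Fin.sum_univ_two]
  exact ⟨fun h => by linarith, fun h => by linarith⟩

lemma baryLine_fst_ne_zero (j : ℕ) (k : Fin 3) (a : ℕ) : (baryLine j k a).1 ≠ 0 := by
  fin_cases k <;> simp [baryLine, funext_iff, Fin.forall_fin_two]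

lemma le_sum_range_ite_eq {m : ℕ} {c : ℤ} (hc : 0 ≤ c) {g : ℤ → ℝ} (hg : ∀ t : ℤ, m ≤ t → g t ≤ 0) :
    g c ≤ ∑ a ∈ range m, if c = a then g a else 0 := by
  lift c to ℕ using hc
  simp only [Nat.cast_inj, sum_ite_eq, mem_range]
  split_ifs with h
  · rfl
  · exact hg c (by exact_mod_cast not_lt.1 h)

lemma sum_range_sub_mul_two (n : ℕ) : (∑ a ∈ range n, ((n : ℝ) - a)) * 2 = n * (n + 1) := by
  have hgauss : (∑ a ∈ range n, (a : ℝ)) * 2 = n * (n - 1) := by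
    induction n with
    | zero => simp
    | succ n ih => rw [sum_range_succ, add_mul, ih]; push_cast; ring
  rw [sum_sub_distrib, sum_const, card_range, nsmul_eq_mul, sub_mul, hgauss]
  ring

noncomputable def triCover (j : ℕ) : ((Fin 2 → ℝ) × ℝ) →₀ ℝ :=
  ∑ p ∈ (univ : Finset (Fin 3)) ×ˢ range (2 * j),
    Finsupp.single (baryLine j p.1 p.2) ((2 * j - p.2) / (3 * j))

lemma fracTotal_triCover {j : ℕ} (hj : 1 ≤ j) : fracTotal (triCover j) = 2 * j + 1 := by
  rw [triCover, fracTotal_sum_single, sum_product]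
  simp only [sum_const, card_univ, Fintype.card_fin, ← sum_div, nsmul_eq_mul, Nat.cast_ofNat]
  have := sum_range_sub_mul_two (2 * j)
  push_cast at this
  have hj' : (0 : ℝ) < j := by exact_mod_cast hj
  field_simp
  linarith

lemma isFracCover_triCover {j : ℕ} (hj : 1 ≤ j) : IsFracCover 2 (3 * j + 1) (triCover j) := by
  have hj' : (0 : ℝ) < j := by exact_mod_cast hj
  refine isFracCover_sum_single _ _ _ (fun p hp => ?_) (fun p _ => baryLine_fst_ne_zero j _ _)
    fun x hx => ?_
  · have := (mem_range.1 (mem_product.1 hp).2)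
    have : (p.2 : ℝ) < 2 * j := by exact_mod_cast this
    apply div_nonneg <;> linarith
  obtain ⟨hx0, hsum⟩ := hx
  rw [Fin.sum_univ_two] at hsum
  push_cast at hsum
  have hbary : ∀ k, 0 ≤ baryCoord j x k := fun k => by
    fin_cases k <;> simp [baryCoord] <;> linarith [hx0 0, hx0 1]
  let g : ℤ → ℝ := fun t => (2 * j - t) / (3 * j)
  calc (1 : ℝ) = ∑ k, g (baryCoord j x k) := by
        simp only [g, Fin.sum_univ_three, baryCoord]
        rw [← add_div, ← add_div, eq_div_iff (by positivity)]
        push_cast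
        ring
    _ ≤ ∑ k, ∑ a ∈ range (2 * j), if baryCoord j x k = a then g a else 0 :=
        sum_le_sum fun k _ => le_sum_range_ite_eq (hbary k) fun t ht => by
          have : (2 * j : ℝ) ≤ t := by exact_mod_cast ht
          exact div_nonpos_of_nonpos_of_nonneg (by linarith) (by positivity)
    _ = _ := by
        rw [sum_product]
        simp only [mem_baryLine_iff, g, Int.cast_natCast]

theorem stmt7 (j : ℕ) (hj : 1 ≤ j) :
    (∃ w : ((Fin 2 → ℝ) × ℝ) →₀ ℝ,
      IsFracCover 2 (3 * j + 1) w ∧ fracTotal w = 2 * (j : ℝ) + 1) ∧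
    (∀ w : ((Fin 2 → ℝ) × ℝ) →₀ ℝ,
      IsFracCover 2 (3 * j + 1) w → 2 * (j : ℝ) + 1 ≤ fracTotal w) :=
  ⟨⟨triCover j, isFracCover_triCover hj, fracTotal_triCover hj⟩,
    fun _ hw => two_mul_add_one_le_fracTotal hj hw⟩
end

section
/- For every integer j ≥ 0, the minimum total weight of a fractional line cover of T_2(3j+3) equals 2j + 2 + (j+1)/(3j+4). -/
open scoped Classical

/-!
Write the points of `T_2(3j+3)` in barycentric coordinates `(a, b, c)`, `a + b + c = 3j + 2`.

Upper bound: give each of the lines `a = z`, `b = z`, `c = z` (`0 ≤ z ≤ 2j+1`) the weight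
`(2j+2-z)/(3j+4)`. A point receives at least `∑ (2j+2-t)/(3j+4)` over its coordinates `t`,
which is `(6j+6-(3j+2))/(3j+4) = 1`, and the total weight is `3(j+1)(2j+3)/(3j+4)`.

Lower bound: weak LP duality with the point weights `(g a + g b + g c)/((j+1)(3j+4)²)` on
the hexagon `a, b, c ≤ 2j+2`, where `g = profile j` is piecewise linear. These weights sum to `1`
on every line `a = z` with `z ≤ 2j+1` (a telescoping computation), hence by symmetry on every line
parallel to a side of the triangle, and they add up to the claimed value. A line in general
position meets the hexagon in at most `j+2` points, and in `j+2` points only if one of them lies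
on the boundary `a, b or c = 2j+2`, where the weight is small; pointwise bounds on the weights
finish the proof.
-/

open Finset

namespace TriGridCover

section Duality

variable {d n : ℕ}

def OnHyperplane (H : (Fin d → ℝ) × ℝ) (x : Fin d → ℤ) : Prop :=
  ∑ i, H.1 i * toReal x i = H.2

theorem fracAt_eq_sum (w : ((Fin d → ℝ) × ℝ) →₀ ℝ) (p : Fin d → ℝ) :
    fracAt w p = w.sum fun H v => if ∑ i, H.1 i * p i = H.2 then v else 0 := by
  rw [fracAt, sum_filter]
  rfl

theorem fracAt_sum_single {ι : Type*} (s : Finset ι) (L : ι → (Fin d → ℝ) × ℝ) (v : ι → ℝ)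
    (p : Fin d → ℝ) :
    fracAt (∑ i ∈ s, Finsupp.single (L i) (v i)) p
      = ∑ i ∈ s with ∑ k, (L i).1 k * p k = (L i).2, v i := by
  rw [fracAt_eq_sum, ← Finsupp.sum_finsetSum_index
    (h := fun (H : (Fin d → ℝ) × ℝ) (v : ℝ) => if ∑ i, H.1 i * p i = H.2 then v else 0)
    (fun _ => ite_self 0) (fun _ _ _ => by split_ifs <;> simp), sum_filter]
  exact sum_congr rfl fun i _ => Finsupp.sum_single_index (ite_self 0)

theorem fracTotal_sum_single {ι : Type*} (s : Finset ι) (L : ι → (Fin d → ℝ) × ℝ) (v : ι → ℝ) :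
    fracTotal (∑ i ∈ s, Finsupp.single (L i) (v i)) = ∑ i ∈ s, v i :=
  (Finsupp.sum_finsetSum_index (h := fun _ v => v) (fun _ => rfl) fun _ _ _ => rfl).symm.trans
    (sum_congr rfl fun _ _ => Finsupp.sum_single_index rfl)

theorem isFracCover_sum_single {ι : Type*} (s : Finset ι) (L : ι → (Fin d → ℝ) × ℝ)
    (v : ι → ℝ) (hv : ∀ i ∈ s, 0 ≤ v i) (hL : ∀ i ∈ s, (L i).1 ≠ 0)
    (hcov : ∀ x ∈ TriGrid d n, 1 ≤ ∑ i ∈ s with OnHyperplane (L i) x, v i) :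
    IsFracCover d n (∑ i ∈ s, Finsupp.single (L i) (v i)) := by
  refine ⟨fun H => ?_, fun H hH => ?_, fun x hx => (fracAt_sum_single ..).symm ▸ hcov x hx⟩
  · rw [Finsupp.finsetSum_apply]
    refine sum_nonneg fun i hi => ?_
    rw [Finsupp.single_apply]
    split_ifs
    exacts [hv i hi, le_rfl]
  · obtain ⟨i, hi, hH⟩ := mem_biUnion.mp (Finsupp.support_finsetSum hH)
    rw [eq_of_mem_singleton (Finsupp.support_single_subset hH)]
    exact hL i hi

theorem sum_le_fracTotal {S : Finset (Fin d → ℤ)} (hS : ∀ x ∈ S, x ∈ TriGrid d n)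
    {y : (Fin d → ℤ) → ℝ} (hy : ∀ x ∈ S, 0 ≤ y x)
    (hline : ∀ H : (Fin d → ℝ) × ℝ, H.1 ≠ 0 → ∑ x ∈ S with OnHyperplane H x, y x ≤ 1)
    {w : ((Fin d → ℝ) × ℝ) →₀ ℝ} (hw : IsFracCover d n w) :
    ∑ x ∈ S, y x ≤ fracTotal w := by
  obtain ⟨hw0, hsupp, hcov⟩ := hw
  calc ∑ x ∈ S, y x ≤ ∑ x ∈ S, y x * fracAt w (toReal x) :=
        sum_le_sum fun x hx => le_mul_of_one_le_right (hy x hx) (hcov x (hS x hx))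
    _ = ∑ H ∈ w.support, w H * ∑ x ∈ S with OnHyperplane H x, y x := by
        simp only [fracAt, mul_sum, sum_filter]
        rw [sum_comm]
        refine sum_congr rfl fun H _ => sum_congr rfl fun x _ => ?_
        unfold OnHyperplane
        split_ifs <;> ring
    _ ≤ ∑ H ∈ w.support, w H :=
        sum_le_sum fun H hH => mul_le_of_le_one_right (hw0 H) (hline H (hsupp H hH))

end Duality

theorem sum_Icc_eq_sub {M : Type*} [AddCommGroup M] {f g : ℤ → M} {a b : ℤ}
    (h : ∀ x ∈ Icc a b, f x = g x - g (x - 1)) (hab : a - 1 ≤ b) :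
    ∑ x ∈ Icc a b, f x = g b - g (a - 1) := by
  induction b, hab using Int.leInduction with
  | base => simp
  | succ b hab ih =>
    rw [← insert_Icc_right_eq_Icc_add_one (by omega), sum_insert (by simp),
      ih fun x hx => h x (by simp at hx ⊢; omega), h (b + 1) (by simp; omega), add_sub_cancel_right]
    abel

section Barycentric

def bary (m : ℤ) (x : Fin 2 → ℤ) : Fin 3 → ℤ := ![x 0, x 1, m - x 0 - x 1]

@[simp] theorem bary_zero (m : ℤ) (x : Fin 2 → ℤ) : bary m x 0 = x 0 := rfl

@[simp] theorem bary_one (m : ℤ) (x : Fin 2 → ℤ) : bary m x 1 = x 1 := rfl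

@[simp] theorem bary_two (m : ℤ) (x : Fin 2 → ℤ) : bary m x 2 = m - x 0 - x 1 := rfl

def baryLine (m : ℤ) : Fin 3 → ℤ → (Fin 2 → ℝ) × ℝ
  | 0, z => (![1, 0], z)
  | 1, z => (![0, 1], z)
  | 2, z => (![1, 1], (m - z : ℤ))

theorem onHyperplane_iff {H : (Fin 2 → ℝ) × ℝ} {x : Fin 2 → ℤ} :
    OnHyperplane H x ↔ H.1 0 * x 0 + H.1 1 * x 1 = H.2 := by
  simp [OnHyperplane, Fin.sum_univ_two, toReal]

theorem onHyperplane_baryLine_iff {m : ℤ} {k : Fin 3} {z : ℤ} {x : Fin 2 → ℤ} :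
    OnHyperplane (baryLine m k z) x ↔ bary m x k = z := by
  rw [onHyperplane_iff]
  fin_cases k <;> simp [baryLine]
  norm_cast
  omega

theorem baryLine_fst_ne_zero (m : ℤ) (k : Fin 3) (z : ℤ) : (baryLine m k z).1 ≠ 0 := by
  fin_cases k <;> simp [baryLine, funext_iff, Fin.forall_fin_two]

def reflect (m : ℤ) : Fin 3 → (Fin 2 → ℤ) → Fin 2 → ℤ
  | 0, x => x
  | 1, x => ![x 1, x 0]
  | 2, x => ![m - x 0 - x 1, x 1]

theorem bary_reflect (m : ℤ) (k : Fin 3) (x : Fin 2 → ℤ) :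
    bary m (reflect m k x) = bary m x ∘ Equiv.swap 0 k := by
  funext i
  fin_cases k <;> fin_cases i <;> simp [reflect, Equiv.swap_apply_of_ne_of_ne] <;> ring

theorem reflect_reflect (m : ℤ) (k : Fin 3) (x : Fin 2 → ℤ) :
    reflect m k (reflect m k x) = x := by
  funext i
  fin_cases k <;> fin_cases i <;> simp [reflect]
  ring

/-- The barycentric coordinates of the direction vector `(H.1 1, -H.1 0)` of the line `H`. -/
def direction (H : (Fin 2 → ℝ) × ℝ) : Fin 3 → ℝ := ![H.1 1, -H.1 0, H.1 0 - H.1 1]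

theorem exists_bary_sub_eq_smul_direction {H : (Fin 2 → ℝ) × ℝ} (hH : H.1 ≠ 0)
    {x y : Fin 2 → ℤ} (hx : OnHyperplane H x) (hy : OnHyperplane H y) (m : ℤ) :
    ∃ t : ℝ, ∀ k, ((bary m x k - bary m y k : ℤ) : ℝ) = t * direction H k := by
  rw [onHyperplane_iff] at hx hy
  by_cases h1 : H.1 1 = 0
  · have h0 : H.1 0 ≠ 0 := fun h0 => hH (funext fun i => by fin_cases i <;> simpa)
    have e : (x 0 : ℝ) = y 0 := mul_left_cancel₀ h0 (by rw [h1] at hx hy; linarith)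
    refine ⟨(y 1 - x 1) / H.1 0, fun k => ?_⟩
    fin_cases k <;> simp [direction, h1, e, div_mul_cancel₀ _ h0]
  · refine ⟨(x 0 - y 0) / H.1 1, fun k => ?_⟩
    fin_cases k <;> simp [direction] <;> field_simp
    · linear_combination hx - hy
    · linear_combination hy - hx

theorem mem_uIcc_of_sub_eq_smul {ι : Type*} {u v w : ι → ℤ} {μ : ι → ℝ} {s t : ℝ} {i₀ : ι}
    (hμ : μ i₀ ≠ 0) (hs : ∀ i, ((v i - u i : ℤ) : ℝ) = s * μ i)
    (ht : ∀ i, ((w i - v i : ℤ) : ℝ) = t * μ i) (hu : u i₀ ≤ v i₀) (hw : v i₀ ≤ w i₀) (i : ι) :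
    v i ∈ uIcc (u i) (w i) := by
  have hst : 0 ≤ s * t := by
    have h : (0 : ℝ) ≤ ((v i₀ - u i₀ : ℤ) : ℝ) * ((w i₀ - v i₀ : ℤ) : ℝ) := by
      exact_mod_cast mul_nonneg (sub_nonneg.2 hu) (sub_nonneg.2 hw)
    rw [hs, ht] at h
    nlinarith [mul_self_pos.2 hμ]
  have h : (0 : ℝ) ≤ ((v i - u i : ℤ) : ℝ) * ((w i - v i : ℤ) : ℝ) := by
    rw [hs, ht]
    nlinarith [mul_self_nonneg (μ i)]
  rw [mem_uIcc']
  rcases mul_nonneg_iff.1 (show (0 : ℤ) ≤ (v i - u i) * (w i - v i) by exact_mod_cast h) with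
    h | h <;> [left; right] <;> omega

end Barycentric

section Cover

variable (j : ℕ)

noncomputable def coverWeight (z : ℤ) : ℝ := (2 * j + 2 - z) / (3 * j + 4)

noncomputable def cover : ((Fin 2 → ℝ) × ℝ) →₀ ℝ :=
  ∑ i ∈ (univ : Finset (Fin 3)) ×ˢ Icc 0 (2 * (j : ℤ) + 1),
    Finsupp.single (baryLine (3 * (j : ℤ) + 2) i.1 i.2) (coverWeight j i.2)

theorem isFracCover_cover : IsFracCover 2 (3 * j + 3) (cover j) := by
  refine isFracCover_sum_single _ _ _ (fun i hi => ?_) (fun i _ => baryLine_fst_ne_zero _ _ _)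
    fun x hx => ?_
  · have : (i.2 : ℝ) ≤ 2 * j + 1 := by exact_mod_cast (mem_Icc.mp (mem_product.mp hi).2).2
    exact div_nonneg (by linarith) (by positivity)
  obtain ⟨hx0, hsum⟩ := hx
  simp only [Fin.sum_univ_two] at hsum
  have hbary : ∀ k, 0 ≤ bary (3 * (j : ℤ) + 2) x k := by
    have := hx0 0
    have := hx0 1
    simp [Fin.forall_fin_succ]
    omega
  calc (1 : ℝ) = ∑ k, coverWeight j (bary (3 * (j : ℤ) + 2) x k) := by
        simp only [Fin.sum_univ_three, coverWeight, bary]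
        push_cast
        field_simp
        ring
    _ ≤ ∑ k, ∑ z ∈ Icc 0 (2 * (j : ℤ) + 1),
          if bary (3 * (j : ℤ) + 2) x k = z then coverWeight j z else 0 := by
        refine sum_le_sum fun k _ => ?_
        rw [sum_ite_eq]
        split_ifs with h
        · exact le_rfl
        have hz : 2 * (j : ℤ) + 2 ≤ bary (3 * (j : ℤ) + 2) x k := by
          have := hbary k
          simp only [mem_Icc] at h
          omega
        have : (2 * j + 2 : ℝ) ≤ bary (3 * (j : ℤ) + 2) x k := by exact_mod_cast hz
        exact div_nonpos_of_nonpos_of_nonneg (by linarith) (by positivity)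
    _ = _ := by
        rw [sum_filter, sum_product]
        simp_rw [← onHyperplane_baryLine_iff (m := 3 * (j : ℤ) + 2)]

theorem fracTotal_cover :
    fracTotal (cover j) = 2 * (j : ℝ) + 2 + ((j : ℝ) + 1) / (3 * (j : ℝ) + 4) := by
  rw [cover, fracTotal_sum_single, sum_product]
  simp only [sum_const, card_univ, Fintype.card_fin, nsmul_eq_mul]
  rw [sum_Icc_eq_sub (g := fun z => ((z : ℝ) + 1) * (4 * j + 4 - z) / (2 * (3 * j + 4)))
      (fun z _ => by rw [coverWeight]; push_cast; field_simp; ring) (by omega)]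
  push_cast
  field_simp
  ring

end Cover

section Dual

variable (j : ℕ)

def profile (t : ℤ) : ℤ :=
  if 0 ≤ t ∧ t ≤ j then (j + 1) * (3 * j + 2 - 3 * t)
  else if j + 1 ≤ t ∧ t ≤ 2 * j + 1 then (2 * j + 3) * (3 * t - 3 * j - 2)
  else 0

def twiceProfileSum (x : ℤ) : ℤ :=
  if x ≤ j then (j + 1) * (x + 1) * (6 * j + 4 - 3 * x)
  else if x ≤ 2 * j + 1 then (j + 1) ^ 2 * (3 * j + 4) + (2 * j + 3) * (x - j) * (3 * (x - j) - 1)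
  else (j + 1) ^ 2 * (3 * j + 4) + (2 * j + 3) * (j + 1) * (3 * j + 2)

theorem two_mul_sum_profile {a b : ℤ} (ha : 0 ≤ a) (hab : a - 1 ≤ b) :
    2 * ∑ t ∈ Icc a b, profile j t = twiceProfileSum j b - twiceProfileSum j (a - 1) := by
  rw [mul_sum]
  refine sum_Icc_eq_sub (fun x hx => ?_) hab
  have := (mem_Icc.mp hx).1
  simp only [profile, twiceProfileSum]
  split_ifs <;> first
    | omega
    | ring1
    | (obtain rfl : x = j + 1 := by omega); ring1
    | (obtain rfl : x = 2 * j + 2 := by omega); ring1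

noncomputable def hexagon : Finset (Fin 2 → ℤ) :=
  (Fintype.piFinset fun _ => Icc 0 (2 * (j : ℤ) + 2)).filter
    fun x => 0 ≤ bary (3 * j + 2) x 2 ∧ bary (3 * j + 2) x 2 ≤ 2 * j + 2

variable {j} in
theorem mem_hexagon {x : Fin 2 → ℤ} :
    x ∈ hexagon j ↔ ∀ k, 0 ≤ bary (3 * j + 2) x k ∧ bary (3 * j + 2) x k ≤ 2 * j + 2 := by
  simp [hexagon, Fin.forall_fin_succ, and_assoc]

/-- The optimal dual solution gives `x` the weight `dualNum j x / ((j + 1) * (3 * j + 4) ^ 2)`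
on the hexagon and `0` elsewhere. -/
def dualNum (x : Fin 2 → ℤ) : ℤ := ∑ k, profile j (bary (3 * j + 2) x k)

noncomputable def column (a : ℤ) : Finset ℤ :=
  Icc (max 0 (j - a)) (min (2 * j + 2) (3 * j + 2 - a))

theorem filter_hexagon_eq_image {a : ℤ} (ha : 0 ≤ a) (ha' : a ≤ 2 * j + 2) :
    (hexagon j).filter (fun x => x 0 = a) = (column j a).image fun b => ![a, b] := by
  ext x
  simp [mem_hexagon, column, funext_iff, Fin.forall_fin_succ]
  constructor <;> intro h <;> omega

theorem sum_filter_hexagon_eq {a : ℤ} (ha : 0 ≤ a) (ha' : a ≤ 2 * j + 2) :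
    ∑ x ∈ hexagon j with x 0 = a, dualNum j x
      = #(column j a) * profile j a + 2 * ∑ b ∈ column j a, profile j b := by
  rw [filter_hexagon_eq_image j ha ha', sum_image fun b _ c _ h => by simpa using congrFun h 1]
  have hreflect : ∑ b ∈ column j a, profile j (3 * j + 2 - a - b)
      = ∑ b ∈ column j a, profile j b :=
    sum_nbij' (3 * j + 2 - a - ·) (3 * j + 2 - a - ·) (by simp [column]; omega)
      (by simp [column]; omega) (by simp) (by simp) (by simp)
  simp only [dualNum, Fin.sum_univ_three, bary_zero, bary_one, bary_two, Matrix.cons_val_zero,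
    Matrix.cons_val_one]
  rw [sum_add_distrib, sum_add_distrib, hreflect, sum_const, nsmul_eq_mul]
  ring

theorem sum_filter_hexagon_of_le {a : ℤ} (ha : 0 ≤ a) (ha' : a ≤ 2 * j + 1) :
    ∑ x ∈ hexagon j with x 0 = a, dualNum j x = (j + 1) * (3 * j + 4) ^ 2 := by
  rw [sum_filter_hexagon_eq j ha (by omega), column, Int.card_Icc,
    two_mul_sum_profile j (le_max_left ..) (by omega)]
  rcases le_or_gt a j with h | h
  · rw [max_eq_right (by omega), min_eq_left (by omega), Int.toNat_of_nonneg (by omega)]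
    simp only [profile, twiceProfileSum]
    split_ifs <;> first | omega | ring1
  · rw [max_eq_left (by omega), min_eq_right (by omega), Int.toNat_of_nonneg (by omega)]
    simp only [profile, twiceProfileSum]
    split_ifs <;> first | omega | ring1

theorem sum_filter_hexagon_top :
    ∑ x ∈ hexagon j with x 0 = 2 * (j : ℤ) + 2, dualNum j x = (j + 1) ^ 2 * (3 * j + 4) := by
  rw [sum_filter_hexagon_eq j (by omega) le_rfl, column, Int.card_Icc,
    two_mul_sum_profile j (le_max_left ..) (by omega), max_eq_left (by omega),
    min_eq_right (by omega)]
  simp only [profile, twiceProfileSum]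
  split_ifs <;> first | omega | ring1

theorem sum_hexagon_dualNum :
    ∑ x ∈ hexagon j, dualNum j x
      = (2 * j + 2) * ((j + 1) * (3 * j + 4) ^ 2) + (j + 1) ^ 2 * (3 * j + 4) := by
  rw [← sum_fiberwise_of_maps_to (g := (· 0)) (t := Icc 0 (2 * (j : ℤ) + 2))
      fun x hx => by simpa using mem_hexagon.1 hx 0,
    show Icc 0 (2 * (j : ℤ) + 2) = insert (2 * (j : ℤ) + 2) (Icc 0 (2 * (j : ℤ) + 1)) by
      ext; simp; omega,
    sum_insert (by simp), sum_filter_hexagon_top,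
    sum_congr rfl fun a ha => sum_filter_hexagon_of_le j (mem_Icc.1 ha).1 (mem_Icc.1 ha).2,
    sum_const, Int.card_Icc, nsmul_eq_mul, Int.toNat_of_nonneg (by omega)]
  ring

theorem dualNum_reflect (k : Fin 3) (x : Fin 2 → ℤ) :
    dualNum j (reflect (3 * j + 2) k x) = dualNum j x := by
  rw [dualNum, bary_reflect]
  exact Equiv.sum_comp (Equiv.swap 0 k) fun i => profile j (bary (3 * j + 2) x i)

variable {j} in
theorem reflect_mem_hexagon (k : Fin 3) {x : Fin 2 → ℤ} (hx : x ∈ hexagon j) :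
    reflect (3 * j + 2) k x ∈ hexagon j := by
  rw [mem_hexagon, bary_reflect] at *
  exact fun i => hx _

theorem sum_filter_bary_eq (k : Fin 3) (v : ℤ) :
    ∑ x ∈ hexagon j with bary (3 * j + 2) x k = v, dualNum j x
      = ∑ x ∈ hexagon j with x 0 = v, dualNum j x := by
  refine sum_nbij' (reflect (3 * j + 2) k) (reflect (3 * j + 2) k) (fun x hx => ?_)
    (fun x hx => ?_) (fun x _ => reflect_reflect ..) (fun x _ => reflect_reflect ..)
    fun x _ => (dualNum_reflect ..).symm
  all_goals
    rw [mem_filter] at hx ⊢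
    refine ⟨reflect_mem_hexagon k hx.1, ?_⟩
  · rw [← bary_zero (3 * j + 2) (reflect _ k x), bary_reflect]
    simpa using hx.2
  · rw [bary_reflect]
    simpa using hx.2

theorem sum_filter_bary_le (k : Fin 3) (v : ℤ) :
    ∑ x ∈ hexagon j with bary (3 * j + 2) x k = v, dualNum j x ≤ (j + 1) * (3 * j + 4) ^ 2 := by
  rw [sum_filter_bary_eq]
  have hbound := fun x (hx : x ∈ hexagon j) => by simpa using mem_hexagon.1 hx 0
  rcases lt_or_ge v 0 with hv | hv
  · rw [filter_false_of_mem fun x hx => by have := hbound x hx; omega, sum_empty]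
    positivity
  rcases le_or_gt v (2 * j + 1) with hv' | hv'
  · exact (sum_filter_hexagon_of_le j hv hv').le
  rcases eq_or_lt_of_le (show 2 * (j : ℤ) + 2 ≤ v by omega) with rfl | hv''
  · rw [sum_filter_hexagon_top]
    nlinarith
  · rw [filter_false_of_mem fun x hx => by have := hbound x hx; omega, sum_empty]
    positivity

variable {j}

theorem dualNum_nonneg (x : Fin 2 → ℤ) : 0 ≤ dualNum j x := by
  refine sum_nonneg fun k _ => ?_
  unfold profile
  split_ifs <;> nlinarith

theorem dualNum_le {x : Fin 2 → ℤ} (hx : x ∈ hexagon j) :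
    dualNum j x ≤ (3 * j + 2) * (3 * j + 4) := by
  simp [mem_hexagon, Fin.forall_fin_succ] at hx
  simp only [dualNum, Fin.sum_univ_three, bary_zero, bary_one, bary_two]
  generalize x 0 = a, x 1 = b at *
  simp only [profile]
  split_ifs <;> nlinarith

theorem dualNum_eq_of_bary_eq {x : Fin 2 → ℤ} (hx : x ∈ hexagon j) {k : Fin 3}
    (hk : bary (3 * j + 2) x k = 2 * j + 2) : dualNum j x = (j + 1) * (3 * j + 4) := by
  simp [mem_hexagon, Fin.forall_fin_succ] at hx
  simp only [dualNum, Fin.sum_univ_three, bary_zero, bary_one, bary_two]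
  fin_cases k <;> simp at hk <;> generalize x 0 = a, x 1 = b at * <;> simp only [profile] <;>
    split_ifs <;> first | omega | nlinarith

theorem card_filter_onHyperplane_le {H : (Fin 2 → ℝ) × ℝ} (hH : H.1 ≠ 0)
    (hdir : ∀ k, direction H k ≠ 0) :
    #{x ∈ hexagon j | OnHyperplane H x} ≤ j + 2 ∧
      (#{x ∈ hexagon j | OnHyperplane H x} = j + 2 →
        ∃ x ∈ {x ∈ hexagon j | OnHyperplane H x}, ∃ k, bary (3 * j + 2) x k = 2 * j + 2) := by
  set F := {x ∈ hexagon j | OnHyperplane H x}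
  rcases F.eq_empty_or_nonempty with hF | hF
  · simp [hF]
  obtain ⟨q, hq, hqmin⟩ := exists_min_image F (· 0) hF
  obtain ⟨p, hp, hpmax⟩ := exists_max_image F (· 0) hF
  have hpar : ∀ x ∈ F, ∀ y ∈ F, ∃ t : ℝ,
      ∀ k, ((bary (3 * j + 2) x k - bary (3 * j + 2) y k : ℤ) : ℝ) = t * direction H k :=
    fun x hx y hy => exists_bary_sub_eq_smul_direction hH (mem_filter.1 hx).2 (mem_filter.1 hy).2 _
  have hinj : ∀ k, Set.InjOn (bary (3 * j + 2) · k) F := by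
    intro k x hx y hy hxy
    obtain ⟨t, ht⟩ := hpar x hx y hy
    have ht0 : t = 0 := by
      have := ht k
      simp only [hxy, sub_self, Int.cast_zero] at this
      exact (mul_eq_zero.1 this.symm).resolve_right (hdir k)
    funext i
    have := ht (Fin.castSucc i)
    rw [ht0, zero_mul, Int.cast_eq_zero, sub_eq_zero] at this
    fin_cases i <;> simpa using this
  have hcard : ∀ k, #F ≤ (bary (3 * j + 2) p k - bary (3 * j + 2) q k).natAbs + 1 := by
    intro k
    rw [← Int.card_uIcc]
    refine card_le_card_of_injOn _ (fun x hx => ?_) (hinj k)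
    obtain ⟨s, hs⟩ := hpar x hx q hq
    obtain ⟨t, ht⟩ := hpar p hp x hx
    exact mem_uIcc_of_sub_eq_smul (hdir 0) hs ht (hqmin x hx) (hpmax x hx) k
  -- The three coordinate differences between `p` and `q` sum to `0`, so the largest one in
  -- absolute value is the sum of the other two; each is at least `#F - 1` and at most `2j+2`.
  have hpH := mem_hexagon.1 (mem_filter.1 hp).1
  have hqH := mem_hexagon.1 (mem_filter.1 hq).1
  have h0 := hcard 0; have h1 := hcard 1; have h2 := hcard 2
  have := hpH 0; have := hpH 1; have := hpH 2; have := hqH 0; have := hqH 1; have := hqH 2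
  simp only [bary_zero, bary_one, bary_two] at *
  refine ⟨by omega, fun hk => ?_⟩
  obtain h | h | h | h | h | h : p 0 = 2 * j + 2 ∨ p 1 = 2 * j + 2 ∨
      3 * j + 2 - p 0 - p 1 = 2 * j + 2 ∨ q 0 = 2 * j + 2 ∨ q 1 = 2 * j + 2 ∨
      3 * j + 2 - q 0 - q 1 = 2 * j + 2 := by omega
  exacts [⟨p, hp, 0, h⟩, ⟨p, hp, 1, h⟩, ⟨p, hp, 2, h⟩, ⟨q, hq, 0, h⟩, ⟨q, hq, 1, h⟩,
    ⟨q, hq, 2, h⟩]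

theorem sum_filter_onHyperplane_le {H : (Fin 2 → ℝ) × ℝ} (hH : H.1 ≠ 0) :
    ∑ x ∈ hexagon j with OnHyperplane H x, dualNum j x ≤ (j + 1) * (3 * j + 4) ^ 2 := by
  set F := {x ∈ hexagon j | OnHyperplane H x}
  by_cases hdir : ∃ k, direction H k = 0
  · obtain ⟨k, hk⟩ := hdir
    rcases F.eq_empty_or_nonempty with hF | ⟨x₀, hx₀⟩
    · rw [hF, sum_empty]
      positivity
    refine le_trans (sum_le_sum_of_subset_of_nonneg (fun x hx => ?_) fun x _ _ => dualNum_nonneg x)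
      (sum_filter_bary_le j k (bary (3 * j + 2) x₀ k))
    obtain ⟨t, ht⟩ := exists_bary_sub_eq_smul_direction hH (mem_filter.1 hx).2
      (mem_filter.1 hx₀).2 (3 * j + 2)
    have := ht k
    rw [hk, mul_zero, Int.cast_eq_zero, sub_eq_zero] at this
    exact mem_filter.2 ⟨(mem_filter.1 hx).1, this⟩
  simp only [not_exists] at hdir
  obtain ⟨hle, hwit⟩ : #F ≤ j + 2 ∧
      (#F = j + 2 → ∃ x ∈ F, ∃ k, bary (3 * j + 2) x k = 2 * j + 2) :=
    card_filter_onHyperplane_le hH hdir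
  have hF : ∀ x ∈ F, dualNum j x ≤ (3 * j + 2) * (3 * j + 4) :=
    fun x hx => dualNum_le (mem_filter.1 hx).1
  rcases hle.lt_or_eq with hlt | hcard
  · calc ∑ x ∈ F, dualNum j x ≤ #F • ((3 * j + 2) * (3 * j + 4)) := sum_le_card_nsmul _ _ _ hF
      _ ≤ (j + 1) * (3 * j + 4) ^ 2 := by
        rw [nsmul_eq_mul]
        have : (#F : ℤ) ≤ j + 1 := by omega
        nlinarith
  · obtain ⟨x, hx, k, hk⟩ := hwit hcard
    rw [← add_sum_erase _ _ hx, dualNum_eq_of_bary_eq (mem_filter.1 hx).1 hk]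
    calc (j + 1) * (3 * j + 4) + ∑ x ∈ F.erase x, dualNum j x
        ≤ (j + 1) * (3 * j + 4) + #(F.erase x) • ((3 * j + 2) * (3 * j + 4)) := by
          gcongr
          exact sum_le_card_nsmul _ _ _ fun y hy => hF y (mem_of_mem_erase hy)
      _ ≤ (j + 1) * (3 * j + 4) ^ 2 := by
        rw [card_erase_of_mem hx, hcard, nsmul_eq_mul]
        push_cast
        nlinarith

theorem mem_triGrid_of_mem_hexagon {x : Fin 2 → ℤ} (hx : x ∈ hexagon j) :
    x ∈ TriGrid 2 (3 * j + 3) := by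
  have := mem_hexagon.1 hx
  refine ⟨fun i => ?_, ?_⟩
  · fin_cases i
    exacts [(this 0).1, (this 1).1]
  · have := (this 2).1
    simp only [bary_two] at this
    simp only [Fin.sum_univ_two]
    push_cast
    omega

theorem le_fracTotal {w : ((Fin 2 → ℝ) × ℝ) →₀ ℝ} (hw : IsFracCover 2 (3 * j + 3) w) :
    2 * (j : ℝ) + 2 + ((j : ℝ) + 1) / (3 * (j : ℝ) + 4) ≤ fracTotal w := by
  have hD : (0 : ℝ) < (j + 1) * (3 * j + 4) ^ 2 := by positivity
  have := sum_le_fracTotal (fun x => mem_triGrid_of_mem_hexagon)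
    (y := fun x => dualNum j x / ((j + 1) * (3 * j + 4) ^ 2))
    (fun x _ => div_nonneg (by exact_mod_cast dualNum_nonneg x) hD.le)
    (fun H hH => by
      rw [← sum_div, div_le_one hD]
      exact_mod_cast sum_filter_onHyperplane_le hH) hw
  rw [← sum_div, ← Int.cast_sum, sum_hexagon_dualNum] at this
  convert this using 1
  push_cast
  field_simp

end Dual

end TriGridCover

theorem stmt10 (j : ℕ) :
    (∃ w : ((Fin 2 → ℝ) × ℝ) →₀ ℝ,
      IsFracCover 2 (3 * j + 3) w ∧
      fracTotal w = 2 * (j : ℝ) + 2 + ((j : ℝ) + 1) / (3 * (j : ℝ) + 4)) ∧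
    (∀ w : ((Fin 2 → ℝ) × ℝ) →₀ ℝ,
      IsFracCover 2 (3 * j + 3) w →
      2 * (j : ℝ) + 2 + ((j : ℝ) + 1) / (3 * (j : ℝ) + 4) ≤ fracTotal w) :=
  ⟨⟨TriGridCover.cover j, TriGridCover.isFracCover_cover j, TriGridCover.fracTotal_cover j⟩,
    fun _ => TriGridCover.le_fracTotal⟩
end

section
/- Let ℓ be a line in ℝ² that is neither horizontal, nor vertical, nor of slope −1, and suppose ℓ contains at least j+2 points of the triangular grid T_2(3j+2) (j ≥ 1) all of which lie in the union of the 2j+2 rows y ∈ {0,…,2j+1} and 2j+2 columns x ∈ {0,…,2j+1}. Then ℓ has slope 1, and consecutive grid points of ℓ differ by (±1, ±1). -/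
/-!
Among `j + 2` points of the line in the columns `0, …, 2j+1` (one point per column, since the
line is not vertical), two lie in the same pair of columns `{2i, 2i+1}`, hence in adjacent
columns. With `ℓ : a x + b y = c` this gives `a = -b k` for a nonzero integer `k`, so
`|b| ≤ |a|`; the same argument with rows gives `|a| ≤ |b|`. Thus `a = -b`, and then the integer
points of `ℓ` are the translates of one of them by multiples of `(1, 1)`.
-/

theorem Finset.exists_map_eq_add_one_of_injOn {α : Type*} {s : Finset α} {f : α → ℤ} {k : ℕ}
    (hf : Set.InjOn f s) (hs : ∀ x ∈ s, f x ∈ Finset.Ico 0 (2 * (k : ℤ)))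
    (hk : k < s.card) : ∃ x ∈ s, ∃ y ∈ s, f y = f x + 1 := by
  have hcard : (Finset.Ico (0 : ℤ) k).card < s.card := by simpa using hk
  obtain ⟨x, hx, y, hy, hxy, hdiv⟩ := Finset.exists_ne_map_eq_of_card_lt_of_maps_to
    (f := fun x => f x / 2) hcard fun x hx => by
      have := Finset.mem_Ico.mp (hs x hx)
      simp only [Finset.coe_Ico, Set.mem_Ico]
      omega
  have hne : f x ≠ f y := fun h => hxy (hf hx hy h)
  rcases lt_or_gt_of_ne hne with h | h
  · exact ⟨x, hx, y, hy, by omega⟩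
  · exact ⟨y, hy, x, hx, by omega⟩

theorem abs_le_abs_of_add_mul_intCast_eq_zero {K : Type*} [Field K] [LinearOrder K]
    [IsStrictOrderedRing K] {a b : K} {k : ℤ} (ha : a ≠ 0) (h : a + b * k = 0) : |b| ≤ |a| := by
  have hk : k ≠ 0 := by
    rintro rfl
    exact ha (by simpa using h)
  have hk1 : (1 : K) ≤ |(k : K)| := by exact_mod_cast Int.one_le_abs hk
  calc |b| = |b| * 1 := (mul_one _).symm
    _ ≤ |b| * |(k : K)| := mul_le_mul_of_nonneg_left hk1 (abs_nonneg b)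
    _ = |a| := by rw [← abs_mul, eq_neg_of_add_eq_zero_left h, abs_neg]

def OnLine (a b c : ℝ) (p : ℤ × ℤ) : Prop :=
  a * (p.1 : ℝ) + b * (p.2 : ℝ) = c

namespace OnLine

variable {a b c : ℝ} {p q : ℤ × ℤ}

theorem sub_eq_zero (hp : OnLine a b c p) (hq : OnLine a b c q) :
    a * ((q.1 - p.1 : ℤ) : ℝ) + b * ((q.2 - p.2 : ℤ) : ℝ) = 0 := by
  unfold OnLine at hp hq
  push_cast
  linarith

theorem fst_injOn (hb : b ≠ 0) : Set.InjOn Prod.fst {p | OnLine a b c p} := by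
  intro p hp q hq h
  have hpq := sub_eq_zero hp hq
  rw [h, sub_self, Int.cast_zero, mul_zero, zero_add, mul_eq_zero] at hpq
  have : q.2 - p.2 = 0 := by exact_mod_cast hpq.resolve_left hb
  exact Prod.ext h (by omega)

theorem snd_injOn (ha : a ≠ 0) : Set.InjOn Prod.snd {p | OnLine a b c p} := by
  intro p hp q hq h
  have hpq := sub_eq_zero hp hq
  rw [h, sub_self, Int.cast_zero, mul_zero, add_zero, mul_eq_zero] at hpq
  have : q.1 - p.1 = 0 := by exact_mod_cast hpq.resolve_left ha
  exact Prod.ext (by omega) h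

theorem abs_le_abs_of_fst_eq_add_one (ha : a ≠ 0) (hp : OnLine a b c p) (hq : OnLine a b c q)
    (h : q.1 = p.1 + 1) : |b| ≤ |a| := by
  have hpq := sub_eq_zero hp hq
  rw [h, add_sub_cancel_left, Int.cast_one, mul_one] at hpq
  exact abs_le_abs_of_add_mul_intCast_eq_zero ha hpq

theorem abs_le_abs_of_snd_eq_add_one (hb : b ≠ 0) (hp : OnLine a b c p) (hq : OnLine a b c q)
    (h : q.2 = p.2 + 1) : |a| ≤ |b| := by
  have hpq := sub_eq_zero hp hq
  rw [h, add_sub_cancel_left, Int.cast_one, mul_one, add_comm] at hpq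
  exact abs_le_abs_of_add_mul_intCast_eq_zero hb hpq

theorem add_one_add_one (hab : a = -b) (hp : OnLine a b c p) :
    OnLine a b c (p.1 + 1, p.2 + 1) := by
  unfold OnLine at hp ⊢
  push_cast
  linarith

theorem snd_eq_add_one (hb : b ≠ 0) (hab : a = -b) (hp : OnLine a b c p) (hq : OnLine a b c q)
    (h : q.1 = p.1 + 1) : q.2 = p.2 + 1 := by
  have hpq := sub_eq_zero hp hq
  rw [h, add_sub_cancel_left, Int.cast_one, mul_one, hab] at hpq
  have hdiff : ((q.2 - p.2 : ℤ) : ℝ) = 1 := mul_left_cancel₀ hb (by linarith)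
  have : q.2 - p.2 = 1 := by exact_mod_cast hdiff
  omega

end OnLine

theorem stmt19_general (j : ℕ) (a b c : ℝ)
    (ha : a ≠ 0) (hb : b ≠ 0) (hab : a ≠ b)
    (P : Finset (ℤ × ℤ))
    (hPcard : (j : ℕ) + 2 ≤ P.card)
    (hP : ∀ p ∈ P, 0 ≤ p.1 ∧ 0 ≤ p.2 ∧ p.1 + p.2 ≤ 3 * (j : ℤ) + 1 ∧
      p.1 ≤ 2 * (j : ℤ) + 1 ∧ p.2 ≤ 2 * (j : ℤ) + 1 ∧
      a * (p.1 : ℝ) + b * (p.2 : ℝ) = c) :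
    a = -b ∧
    ∀ p q : ℤ × ℤ,
      a * (p.1 : ℝ) + b * (p.2 : ℝ) = c →
      a * (q.1 : ℝ) + b * (q.2 : ℝ) = c →
      p.1 < q.1 →
      (∀ r : ℤ × ℤ, a * (r.1 : ℝ) + b * (r.2 : ℝ) = c →
        ¬(p.1 < r.1 ∧ r.1 < q.1)) →
      q.1 - p.1 = 1 ∧ q.2 - p.2 = 1 := by
  have hPline : ∀ p ∈ P, OnLine a b c p := fun p hp => (hP p hp).2.2.2.2.2
  have hk : j + 1 < P.card := by omega
  have hcoords : ∀ p ∈ P, p.1 ∈ Finset.Ico 0 (2 * ((j + 1 : ℕ) : ℤ)) ∧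
      p.2 ∈ Finset.Ico 0 (2 * ((j + 1 : ℕ) : ℤ)) := fun p hp => by
    have := hP p hp
    simp only [Finset.mem_Ico]
    omega
  obtain ⟨p, hp, q, hq, hcol⟩ := Finset.exists_map_eq_add_one_of_injOn
    ((OnLine.fst_injOn hb).mono hPline) (fun p hp => (hcoords p hp).1) hk
  obtain ⟨p', hp', q', hq', hrow⟩ := Finset.exists_map_eq_add_one_of_injOn
    ((OnLine.snd_injOn ha).mono hPline) (fun p hp => (hcoords p hp).2) hk
  have hab' : a = -b := (abs_eq_abs.mp <| le_antisymm
    (OnLine.abs_le_abs_of_snd_eq_add_one hb (hPline p' hp') (hPline q' hq') hrow)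
    (OnLine.abs_le_abs_of_fst_eq_add_one ha (hPline p hp) (hPline q hq) hcol)).resolve_left hab
  refine ⟨hab', fun p q hp hq hlt hmin => ?_⟩
  have hnext : q.1 = p.1 + 1 := by
    have := hmin _ (OnLine.add_one_add_one hab' hp)
    simp only at this
    omega
  have := OnLine.snd_eq_add_one hb hab' hp hq hnext
  omega

/-- Let `ℓ = {(x, y) | a x + b y = c}` be a line in `ℝ²` that is neither horizontal (`a ≠ 0`),
nor vertical (`b ≠ 0`), nor of slope `-1` (`a ≠ b`). If `ℓ` contains at least `j + 2` points of
the triangular grid `T_2(3j+2)` all lying in the rows and columns `0, …, 2j+1`, then `ℓ` has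
slope `1` (i.e. `a = -b`) and any two consecutive integer points of `ℓ` differ by `(1, 1)`. -/
theorem stmt19 (j : ℕ) (hj : 1 ≤ j) (a b c : ℝ)
    (ha : a ≠ 0) (hb : b ≠ 0) (hab : a ≠ b)
    (P : Finset (ℤ × ℤ))
    (hPcard : (j : ℕ) + 2 ≤ P.card)
    (hP : ∀ p ∈ P, 0 ≤ p.1 ∧ 0 ≤ p.2 ∧ p.1 + p.2 ≤ 3 * (j : ℤ) + 1 ∧
      p.1 ≤ 2 * (j : ℤ) + 1 ∧ p.2 ≤ 2 * (j : ℤ) + 1 ∧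
      a * (p.1 : ℝ) + b * (p.2 : ℝ) = c) :
    a = -b ∧
    ∀ p q : ℤ × ℤ,
      a * (p.1 : ℝ) + b * (p.2 : ℝ) = c →
      a * (q.1 : ℝ) + b * (q.2 : ℝ) = c →
      p.1 < q.1 →
      (∀ r : ℤ × ℤ, a * (r.1 : ℝ) + b * (r.2 : ℝ) = c →
        ¬(p.1 < r.1 ∧ r.1 < q.1)) →
      q.1 - p.1 = 1 ∧ q.2 - p.2 = 1 :=
  stmt19_general j a b c ha hb hab P hPcard hP
end
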